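/- arXiv:math/0502095 — 4 statements merged into one kernel-verified Lean document; each statement's English description precedes it below -/
import Mathlib

section
/- Let L and F be finite-dimensional coalgebras over a field k, let x : L → End(F) be a linear map whose values are right invariant operators on F, and let π_x : T(L) → End(T(F)) be the associated algebra homomorphism. Then the kernel R := ker(π_x) is a coideal of T(L): Δ_{T(L)}(R) ⊆ R ⊗ T(L) + T(L) ⊗ R (as subspaces of T(L) ⊗ T(L)), and ε_{T(L)}(R) = 0. Consequently the ideal of relations of the realized bialgebra U_x = π_x(T(L)) is a coideal. -/
set_option maxHeartbeats 1000000
set_option synthInstance.maxHeartbeats 200000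
set_option linter.unusedSectionVars false
open TensorProduct

/-- The unique algebra homomorphism `Δ_{T(L)} : T(L) → T(L) ⊗ T(L)` with
`Δ_{T(L)}(ι l) = (ι ⊗ ι)(Δ_L l)`. -/
noncomputable def comulTensorAlgebra (k L : Type*) [Field k] [AddCommGroup L] [Module k L]
    [Coalgebra k L] :
    TensorAlgebra k L →ₐ[k] TensorAlgebra k L ⊗[k] TensorAlgebra k L :=
  TensorAlgebra.lift k
    (TensorProduct.map (TensorAlgebra.ι k) (TensorAlgebra.ι k) ∘ₗ Coalgebra.comul)

/-- The unique algebra homomorphism `ε_{T(L)} : T(L) → k` with `ε_{T(L)}(ι l) = ε_L l`. -/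
noncomputable def counitTensorAlgebra (k L : Type*) [Field k] [AddCommGroup L] [Module k L]
    [Coalgebra k L] : TensorAlgebra k L →ₐ[k] k :=
  TensorAlgebra.lift k (Coalgebra.counit : L →ₗ[k] k)

section aux
variable {k M N P : Type*} [Field k]
  [AddCommGroup M] [Module k M] [AddCommGroup N] [Module k N] [AddCommGroup P] [Module k P]

lemma repr_eq_mul'_coord {ιM ιN : Type*} (B : Module.Basis ιM k M) (C : Module.Basis ιN k N)
    (i : ιM) (j : ιN) (t : M ⊗[k] N) :
    (B.tensorProduct C).repr t (i, j) =
      LinearMap.mul' k k (TensorProduct.map (B.coord i) (C.coord j) t) := by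
  induction t with
  | zero => simp
  | tmul m n => simp [Module.Basis.tensorProduct_repr_tmul_apply, Module.Basis.coord_apply, mul_comm]
  | add a b ha hb => simp [ha, hb]

variable {V W : Type*} [AddCommGroup V] [Module k V] [AddCommGroup W] [Module k W]

lemma sep_aux1 (v : V) (w : W) (t : Module.Dual k V ⊗[k] Module.Dual k W) :
    ((TensorProduct.lid k (Module.Dual k W))
        (TensorProduct.map (LinearMap.applyₗ v) LinearMap.id t)) w =
      LinearMap.mul' k k (TensorProduct.map (LinearMap.applyₗ v) (LinearMap.applyₗ w) t) := by
  induction t with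
  | zero => simp
  | tmul f g => simp
  | add a b ha hb => simp [ha, hb]

lemma sep_aux2 (v : V) (g : Module.Dual k W →ₗ[k] k)
    (t : Module.Dual k V ⊗[k] Module.Dual k W) :
    ((TensorProduct.rid k (Module.Dual k V))
        (TensorProduct.map LinearMap.id g t)) v =
      g ((TensorProduct.lid k (Module.Dual k W))
        (TensorProduct.map (LinearMap.applyₗ v) LinearMap.id t)) := by
  induction t with
  | zero => simp
  | tmul f g' => simp [mul_comm]
  | add a b ha hb => simp [ha, hb]

/-- separation: a tensor of duals killed by all evaluation pairs is zero -/
lemma dual_tensor_sep (t : Module.Dual k V ⊗[k] Module.Dual k W)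
    (h : ∀ (v : V) (w : W),
      LinearMap.mul' k k (TensorProduct.map (LinearMap.applyₗ v) (LinearMap.applyₗ w) t) = 0) :
    t = 0 := by
  classical
  let B := Module.Free.chooseBasis k (Module.Dual k V)
  let C := Module.Free.chooseBasis k (Module.Dual k W)
  have hsv : ∀ v : V, (TensorProduct.lid k (Module.Dual k W))
      (TensorProduct.map (LinearMap.applyₗ v) LinearMap.id t) = 0 := fun v =>
    LinearMap.ext fun w => by rw [sep_aux1 v w t, h v w]; simp
  have hqj : ∀ j, TensorProduct.map (LinearMap.id) (C.coord j) t = 0 := by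
    intro j
    have hrid : (TensorProduct.rid k (Module.Dual k V))
        (TensorProduct.map LinearMap.id (C.coord j) t) = 0 :=
      LinearMap.ext fun v => by rw [sep_aux2 v (C.coord j) t, hsv v]; simp
    exact (LinearEquiv.map_eq_zero_iff _).mp hrid
  have hrepr : (B.tensorProduct C).repr t = 0 := by
    refine Finsupp.ext fun ij => ?_
    rw [show ij = (ij.1, ij.2) from rfl, repr_eq_mul'_coord]
    have hsplit : TensorProduct.map (B.coord ij.1) (C.coord ij.2) t =
        TensorProduct.map (B.coord ij.1) LinearMap.id
          (TensorProduct.map LinearMap.id (C.coord ij.2) t) := by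
      rw [← LinearMap.comp_apply, ← TensorProduct.map_comp]
      simp
    rw [hsplit, hqj ij.2]
    simp
  exact (LinearEquiv.map_eq_zero_iff (B.tensorProduct C).repr).mp hrepr

/-- kernel of `map f f` is contained in `ker ⊗ + ⊗ ker` (over a field). -/
lemma mem_sup_of_map_eq_zero (f : M →ₗ[k] P) (t : M ⊗[k] M)
    (h : TensorProduct.map f f t = 0) :
    t ∈ LinearMap.range (TensorProduct.map (LinearMap.ker f).subtype
          (LinearMap.id : M →ₗ[k] M)) ⊔
        LinearMap.range (TensorProduct.map (LinearMap.id : M →ₗ[k] M)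
          (LinearMap.ker f).subtype) := by
  classical
  set f' := f.rangeRestrict with hf'
  have hsub : (LinearMap.range f).subtype ∘ₗ f' = f := by
    ext m; simp [hf']
  have hff : TensorProduct.map f f =
      (TensorProduct.map (LinearMap.range f).subtype (LinearMap.range f).subtype) ∘ₗ
      (TensorProduct.map f' f') := by
    rw [← TensorProduct.map_comp, hsub]
  have hinj : Function.Injective
      (TensorProduct.map (LinearMap.range f).subtype (LinearMap.range f).subtype) := by
    rw [← LinearMap.rTensor_comp_lTensor]
    exact (Module.Flat.rTensor_preserves_injective_linearMap _
      (Submodule.injective_subtype _)).comp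
      (Module.Flat.lTensor_preserves_injective_linearMap _ (Submodule.injective_subtype _))
  have h0 : t ∈ LinearMap.ker (TensorProduct.map f' f') := by
    simp only [LinearMap.mem_ker]
    apply hinj
    rw [← LinearMap.comp_apply, ← hff, h, map_zero]
  have hexact : Function.Exact (LinearMap.ker f).subtype f' := by
    rw [← LinearMap.ker_rangeRestrict f]
    exact f'.exact_subtype_ker_map
  rw [TensorProduct.map_ker (hfg := hexact) (hg := f.surjective_rangeRestrict)
    (hfg' := hexact) (hg' := f.surjective_rangeRestrict)] at h0
  rw [sup_comm]
  exact h0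
end aux

section coalg
variable (k M : Type*) [Field k] [AddCommGroup M] [Module k M] [Coalgebra k M]

@[simp] lemma comulTA_ι (m : M) :
    comulTensorAlgebra k M (TensorAlgebra.ι k m) =
      TensorProduct.map (TensorAlgebra.ι k) (TensorAlgebra.ι k) (Coalgebra.comul m) := by
  simp [comulTensorAlgebra]

@[simp] lemma counitTA_ι (m : M) :
    counitTensorAlgebra k M (TensorAlgebra.ι k m) = Coalgebra.counit m := by
  simp [counitTensorAlgebra]

/-- the counit identity `(ε ⊗ id) ∘ Δ = id` on the tensor algebra -/
lemma counit_id_TA (w : TensorAlgebra k M) :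
    (TensorProduct.lid k (TensorAlgebra k M))
      (LinearMap.rTensor (TensorAlgebra k M) (counitTensorAlgebra k M).toLinearMap
        (comulTensorAlgebra k M w)) = w := by
  let K : TensorAlgebra k M ⊗[k] TensorAlgebra k M →ₐ[k] TensorAlgebra k M :=
    (Algebra.TensorProduct.lid k (TensorAlgebra k M)).toAlgHom.comp
      (Algebra.TensorProduct.map (counitTensorAlgebra k M) (AlgHom.id k (TensorAlgebra k M)))
  have hKlin : ∀ z : TensorAlgebra k M ⊗[k] TensorAlgebra k M, K z =
      (TensorProduct.lid k (TensorAlgebra k M))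
        (LinearMap.rTensor (TensorAlgebra k M) (counitTensorAlgebra k M).toLinearMap z) := by
    intro z
    induction z with
    | zero => simp only [map_zero]
    | tmul a b => simp [K, Algebra.TensorProduct.lid_tmul, smul_eq_mul]
    | add a b ha hb => simp only [map_add, ha, hb]
  have hK : K.comp (comulTensorAlgebra k M) = AlgHom.id k (TensorAlgebra k M) := by
    apply TensorAlgebra.hom_ext
    apply LinearMap.ext fun m => ?_
    have h2 : ∀ c : M ⊗[k] M, K (TensorProduct.map (TensorAlgebra.ι k)
        (TensorAlgebra.ι k) c) = TensorAlgebra.ι k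
          ((TensorProduct.lid k M) (LinearMap.rTensor M (Coalgebra.counit (R := k)) c)) := by
      intro c
      induction c with
      | zero => simp only [map_zero]
      | tmul a b =>
        simp only [map_tmul, K, AlgHom.comp_apply, Algebra.TensorProduct.map_tmul,
          AlgEquiv.toAlgHom_eq_coe, AlgHom.coe_coe, Algebra.TensorProduct.lid_tmul,
          AlgHom.coe_id, id_eq, counitTA_ι, LinearMap.rTensor_tmul, TensorProduct.lid_tmul,
          map_smul]
        exact Algebra.TensorProduct.lid_tmul _ _
      | add a b ha hb => simp only [map_add, ha, hb]
    have h1 : K ((comulTensorAlgebra k M) ((TensorAlgebra.ι k) m)) = TensorAlgebra.ι k m := by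
      rw [comulTA_ι, h2, Coalgebra.rTensor_counit_comul]
      simp
    simpa using h1
  have := congrArg (fun (g : TensorAlgebra k M →ₐ[k] TensorAlgebra k M) => g w) hK
  simp only [AlgHom.comp_apply, AlgHom.id_apply] at this
  rw [← hKlin]
  exact this

end coalg

section main
variable {k L F : Type*} [Field k]
    [AddCommGroup L] [Module k L] [Coalgebra k L]
    [AddCommGroup F] [Module k F] [Coalgebra k F]
    (x : L →ₗ[k] Module.End k F)
    (hx : ∀ l : L, Coalgebra.comul ∘ₗ (x l : F →ₗ[k] F) =
      TensorProduct.map (x l) LinearMap.id ∘ₗ Coalgebra.comul)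
    (X : L →ₗ[k] Module.End k (TensorAlgebra k F))
    (hX1 : ∀ l : L, X l 1 = Coalgebra.counit (R := k) l • (1 : TensorAlgebra k F))
    (hX2 : ∀ (l : L) (f : F), X l (TensorAlgebra.ι k f) = TensorAlgebra.ι k (x l f))
    (hX3 : ∀ (l : L) (w₁ w₂ : TensorAlgebra k F), X l (w₁ * w₂) =
      LinearMap.mul' k (TensorAlgebra k F)
        (TensorProduct.map (LinearMap.applyₗ w₁ ∘ₗ X) (LinearMap.applyₗ w₂ ∘ₗ X)
          (Coalgebra.comul (R := k) l)))

local notation "TF" => TensorAlgebra k F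
local notation "ΔF" => comulTensorAlgebra k F

include x hx X hX1 hX2 hX3 in
/-- right invariance of the operators `X l` on the tensor algebra -/
lemma X_rightInvariant (w : TF) : ∀ l : L,
    ΔF (X l w) = LinearMap.rTensor TF (X l) (ΔF w) := by
  induction w using TensorAlgebra.induction with
  | algebraMap r =>
    intro l
    rw [Algebra.algebraMap_eq_smul_one, map_smul, map_smul, map_smul, hX1 l,
      map_smul, map_one, map_smul]
    rw [Algebra.TensorProduct.one_def, LinearMap.rTensor_tmul, hX1 l]
    rw [smul_tmul']
  | ι f =>
    intro l
    have hc := LinearMap.congr_fun (hx l) f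
    simp only [LinearMap.comp_apply] at hc
    have key : ∀ c : F ⊗[k] F,
        TensorProduct.map (TensorAlgebra.ι k) (TensorAlgebra.ι k)
          (TensorProduct.map (x l) LinearMap.id c) =
        LinearMap.rTensor TF (X l)
          (TensorProduct.map (TensorAlgebra.ι k) (TensorAlgebra.ι k) c) := by
      intro c
      induction c with
      | zero => simp only [map_zero]
      | tmul a b =>
        simp only [TensorProduct.map_tmul, LinearMap.rTensor_tmul, LinearMap.id_coe, id_eq,
          hX2 l]
      | add c₁ c₂ h₁ h₂ => simp only [map_add, h₁, h₂]
    rw [hX2 l f, comulTA_ι, comulTA_ι, hc, key]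
  | mul a b ha hb =>
    intro l
    rw [hX3 l a b, map_mul]
    -- G z l' = rTensor (X l') z
    set G : TF ⊗[k] TF → (L →ₗ[k] TF ⊗[k] TF) := fun z =>
      LinearMap.applyₗ z ∘ₗ (LinearMap.rTensorHom TF ∘ₗ X) with hG
    have hGapp : ∀ (z : TF ⊗[k] TF) (l' : L), G z l' = LinearMap.rTensor TF (X l') z := by
      intro z l'; simp [hG, LinearMap.applyₗ]; rfl
    have h1 : ∀ c : L ⊗[k] L,
        ΔF (LinearMap.mul' k TF (TensorProduct.map (LinearMap.applyₗ a ∘ₗ X)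
          (LinearMap.applyₗ b ∘ₗ X) c)) =
        LinearMap.mul' k (TF ⊗[k] TF) (TensorProduct.map (G (ΔF a)) (G (ΔF b)) c) := by
      intro c
      induction c with
      | zero => simp only [map_zero]
      | tmul l₁ l₂ =>
        simp only [TensorProduct.map_tmul, LinearMap.mul'_apply, LinearMap.comp_apply,
          LinearMap.applyₗ_apply_apply, map_mul, hGapp]
        rw [ha l₁, hb l₂]
      | add c₁ c₂ h₁ h₂ => simp only [map_add, h₁, h₂]
    have h3 : ∀ (p q r s : TF) (c : L ⊗[k] L),
        LinearMap.mul' k (TF ⊗[k] TF)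
          (TensorProduct.map (G (p ⊗ₜ[k] q)) (G (r ⊗ₜ[k] s)) c) =
        (LinearMap.mul' k TF (TensorProduct.map (LinearMap.applyₗ p ∘ₗ X)
          (LinearMap.applyₗ r ∘ₗ X) c)) ⊗ₜ[k] (q * s) := by
      intro p q r s c
      induction c with
      | zero => simp only [map_zero, TensorProduct.zero_tmul]
      | tmul l₁ l₂ =>
        simp only [TensorProduct.map_tmul, LinearMap.mul'_apply, hGapp,
          LinearMap.rTensor_tmul, LinearMap.comp_apply, LinearMap.applyₗ_apply_apply,
          Algebra.TensorProduct.tmul_mul_tmul]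
      | add c₁ c₂ h₁ h₂ => simp only [map_add, h₁, h₂, TensorProduct.add_tmul]
    have h2 : ∀ z₁ z₂ : TF ⊗[k] TF,
        LinearMap.mul' k (TF ⊗[k] TF) (TensorProduct.map (G z₁) (G z₂) (Coalgebra.comul l)) =
        LinearMap.rTensor TF (X l) (z₁ * z₂) := by
      intro z₁
      have hG0 : G 0 = 0 := by
        rw [hG]; simp only [map_zero, LinearMap.zero_comp]
      have hGadd : ∀ z z' : TF ⊗[k] TF, G (z + z') = G z + G z' := by
        intro z z'
        show LinearMap.applyₗ (z + z') ∘ₗ (LinearMap.rTensorHom TF ∘ₗ X) = _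
        rw [map_add, LinearMap.add_comp]
      induction z₁ with
      | zero =>
        intro z₂
        rw [hG0, TensorProduct.map_zero_left]
        simp only [LinearMap.zero_apply, map_zero, zero_mul]
      | tmul p q =>
        intro z₂
        induction z₂ with
        | zero =>
          rw [hG0, TensorProduct.map_zero_right]
          simp only [LinearMap.zero_apply, map_zero, mul_zero]
        | tmul r s =>
          rw [h3 p q r s (Coalgebra.comul l), ← hX3 l p r]
          simp only [Algebra.TensorProduct.tmul_mul_tmul, LinearMap.rTensor_tmul]
        | add z₂₁ z₂₂ hz₁ hz₂ =>
          rw [hGadd z₂₁ z₂₂, TensorProduct.map_add_right, LinearMap.add_apply, map_add, hz₁, hz₂, mul_add, map_add]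
      | add z₁₁ z₁₂ hz₁ hz₂ =>
        intro z₂
        rw [hGadd z₁₁ z₁₂, TensorProduct.map_add_left, LinearMap.add_apply, map_add, hz₁ z₂, hz₂ z₂, add_mul,
          map_add]
    rw [h1 (Coalgebra.comul l), h2 (ΔF a) (ΔF b)]
  | add a b ha hb =>
    intro l
    rw [map_add, map_add, map_add]
    rw [ha l, hb l, map_add]

variable (πx : TensorAlgebra k L →ₐ[k] Module.End k (TensorAlgebra k F))
    (hπx : ∀ l : L, πx (TensorAlgebra.ι k l) = X l)

local notation "εF" => counitTensorAlgebra k F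
local notation "ΔL" => comulTensorAlgebra k L
local notation "εL" => counitTensorAlgebra k L

include x hx X hX1 hX2 hX3 πx hπx in
lemma pix_rightInvariant (u : TensorAlgebra k L) : ∀ w : TF,
    ΔF (πx u w) = LinearMap.rTensor TF (πx u) (ΔF w) := by
  induction u using TensorAlgebra.induction with
  | algebraMap r =>
    intro w
    rw [AlgHom.commutes, Module.algebraMap_end_eq_smul_id, LinearMap.rTensor_smul,
      LinearMap.rTensor_id]
    simp only [LinearMap.smul_apply, LinearMap.id_apply, map_smul]
  | ι l =>
    intro w
    rw [hπx l]
    exact X_rightInvariant x hx X hX1 hX2 hX3 w l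
  | mul a b ha hb =>
    intro w
    rw [map_mul, Module.End.mul_eq_comp, LinearMap.comp_apply, ha (πx b w), hb w,
      LinearMap.rTensor_comp, LinearMap.comp_apply]
  | add a b ha hb =>
    intro w
    rw [map_add, LinearMap.add_apply, map_add, ha w, hb w, LinearMap.rTensor_add,
      LinearMap.add_apply]

/-- reconstruction of a right-invariant operator from its counit composite -/
lemma reconstruct (E : Module.End k TF)
    (hE : ∀ w : TF, ΔF (E w) = LinearMap.rTensor TF E (ΔF w)) (w : TF) :
    (TensorProduct.lid k TF)
      (LinearMap.rTensor TF ((counitTensorAlgebra k F).toLinearMap ∘ₗ E) (ΔF w)) = E w := by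
  rw [LinearMap.rTensor_comp, LinearMap.comp_apply, ← hE w]
  exact counit_id_TA k F (E w)

include x X hX3 πx hπx in
lemma pix_prod (u : TensorAlgebra k L) : ∀ w₁ w₂ : TF,
    πx u (w₁ * w₂) = LinearMap.mul' k TF
      (TensorProduct.map (LinearMap.applyₗ w₁ ∘ₗ πx.toLinearMap)
        (LinearMap.applyₗ w₂ ∘ₗ πx.toLinearMap) (ΔL u)) := by
  induction u using TensorAlgebra.induction with
  | algebraMap r =>
    intro w₁ w₂
    rw [AlgHom.commutes, AlgHom.commutes, Module.algebraMap_end_apply,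
      Algebra.algebraMap_eq_smul_one (A := TensorAlgebra k L ⊗[k] TensorAlgebra k L),
      Algebra.TensorProduct.one_def, map_smul, TensorProduct.map_tmul, map_smul]
    simp only [LinearMap.comp_apply, LinearMap.applyₗ_apply_apply, AlgHom.toLinearMap_apply,
      map_one, Module.End.one_apply, LinearMap.mul'_apply]
  | ι l =>
    intro w₁ w₂
    rw [hπx l, hX3 l w₁ w₂, comulTA_ι]
    have key : ∀ c : L ⊗[k] L,
        LinearMap.mul' k TF (TensorProduct.map (LinearMap.applyₗ w₁ ∘ₗ X)
          (LinearMap.applyₗ w₂ ∘ₗ X) c) =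
        LinearMap.mul' k TF (TensorProduct.map (LinearMap.applyₗ w₁ ∘ₗ πx.toLinearMap)
          (LinearMap.applyₗ w₂ ∘ₗ πx.toLinearMap)
            (TensorProduct.map (TensorAlgebra.ι k) (TensorAlgebra.ι k) c)) := by
      intro c
      induction c with
      | zero => simp only [map_zero]
      | tmul l₁ l₂ =>
        simp only [TensorProduct.map_tmul, LinearMap.comp_apply,
          LinearMap.applyₗ_apply_apply, AlgHom.toLinearMap_apply, hπx]
      | add c₁ c₂ h₁ h₂ => simp only [map_add, h₁, h₂]
    exact key (Coalgebra.comul l)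
  | mul a b ha hb =>
    intro w₁ w₂
    have step : ∀ z : TensorAlgebra k L ⊗[k] TensorAlgebra k L,
        πx a (LinearMap.mul' k TF (TensorProduct.map (LinearMap.applyₗ w₁ ∘ₗ πx.toLinearMap)
          (LinearMap.applyₗ w₂ ∘ₗ πx.toLinearMap) z)) =
        LinearMap.mul' k TF (TensorProduct.map (LinearMap.applyₗ w₁ ∘ₗ πx.toLinearMap)
          (LinearMap.applyₗ w₂ ∘ₗ πx.toLinearMap) (ΔL a * z)) := by
      intro z
      induction z with
      | zero => simp only [map_zero, mul_zero]
      | tmul u v =>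
        rw [TensorProduct.map_tmul]
        simp only [LinearMap.comp_apply, LinearMap.applyₗ_apply_apply,
          AlgHom.toLinearMap_apply, LinearMap.mul'_apply]
        rw [ha (πx u w₁) (πx v w₂)]
        have inner : ∀ y : TensorAlgebra k L ⊗[k] TensorAlgebra k L,
            LinearMap.mul' k TF (TensorProduct.map
              (LinearMap.applyₗ (πx u w₁) ∘ₗ πx.toLinearMap)
              (LinearMap.applyₗ (πx v w₂) ∘ₗ πx.toLinearMap) y) =
            LinearMap.mul' k TF (TensorProduct.map
              (LinearMap.applyₗ w₁ ∘ₗ πx.toLinearMap)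
              (LinearMap.applyₗ w₂ ∘ₗ πx.toLinearMap) (y * (u ⊗ₜ[k] v))) := by
          intro y
          induction y with
          | zero => simp only [map_zero, zero_mul]
          | tmul u' v' =>
            rw [Algebra.TensorProduct.tmul_mul_tmul]
            simp only [TensorProduct.map_tmul, LinearMap.comp_apply,
              LinearMap.applyₗ_apply_apply, AlgHom.toLinearMap_apply, LinearMap.mul'_apply,
              map_mul, Module.End.mul_apply]
          | add y₁ y₂ h₁ h₂ =>
            rw [add_mul]
            simp only [map_add]
            rw [h₁, h₂]
        exact inner (ΔL a)
      | add z₁ z₂ h₁ h₂ =>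
        rw [mul_add]
        simp only [map_add]
        rw [h₁, h₂]
    rw [map_mul πx a b, Module.End.mul_apply, hb w₁ w₂, step (ΔL b),
      map_mul (comulTensorAlgebra k L) a b]
  | add a b ha hb =>
    intro w₁ w₂
    rw [map_add, LinearMap.add_apply, ha w₁ w₂, hb w₁ w₂, map_add, map_add, map_add]

include X hX1 πx hπx in
lemma pix_one (u : TensorAlgebra k L) : πx u 1 = εL u • (1 : TF) := by
  induction u using TensorAlgebra.induction with
  | algebraMap r =>
    rw [AlgHom.commutes, AlgHom.commutes, Module.algebraMap_end_apply,
      Algebra.algebraMap_self, RingHom.id_apply]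
  | ι l => rw [hπx l, hX1 l, counitTA_ι]
  | mul a b ha hb =>
    rw [map_mul, Module.End.mul_apply, hb, map_smul, ha, map_mul, smul_smul, mul_comm]
  | add a b ha hb =>
    rw [map_add, LinearMap.add_apply, ha, hb, map_add, add_smul]

end main


/-- the ideal of relations `R = ker π_x` is a coideal of `T(L)`:
`Δ(R) ⊆ R ⊗ T(L) + T(L) ⊗ R` and `ε(R) = 0`. -/
theorem relations_ideal_is_coideal
    (k L F : Type*) [Field k]
    [AddCommGroup L] [Module k L] [Coalgebra k L] [FiniteDimensional k L]
    [AddCommGroup F] [Module k F] [Coalgebra k F] [FiniteDimensional k F]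
    (x : L →ₗ[k] Module.End k F)
    (hx : ∀ l : L, Coalgebra.comul ∘ₗ (x l : F →ₗ[k] F) =
      TensorProduct.map (x l) LinearMap.id ∘ₗ Coalgebra.comul)
    (X : L →ₗ[k] Module.End k (TensorAlgebra k F))
    (hX1 : ∀ l : L, X l 1 = Coalgebra.counit (R := k) l • (1 : TensorAlgebra k F))
    (hX2 : ∀ (l : L) (f : F), X l (TensorAlgebra.ι k f) = TensorAlgebra.ι k (x l f))
    (hX3 : ∀ (l : L) (w₁ w₂ : TensorAlgebra k F), X l (w₁ * w₂) =
      LinearMap.mul' k (TensorAlgebra k F)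
        (TensorProduct.map (LinearMap.applyₗ w₁ ∘ₗ X) (LinearMap.applyₗ w₂ ∘ₗ X)
          (Coalgebra.comul (R := k) l)))
    (πx : TensorAlgebra k L →ₐ[k] Module.End k (TensorAlgebra k F))
    (hπx : ∀ l : L, πx (TensorAlgebra.ι k l) = X l) :
    (∀ w ∈ LinearMap.ker πx.toLinearMap,
      comulTensorAlgebra k L w ∈
        LinearMap.range (TensorProduct.map (LinearMap.ker πx.toLinearMap).subtype
          (LinearMap.id : TensorAlgebra k L →ₗ[k] TensorAlgebra k L)) ⊔
        LinearMap.range (TensorProduct.map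
          (LinearMap.id : TensorAlgebra k L →ₗ[k] TensorAlgebra k L)
          (LinearMap.ker πx.toLinearMap).subtype)) ∧
    (∀ w ∈ LinearMap.ker πx.toLinearMap, counitTensorAlgebra k L w = 0) := by
  constructor
  · intro w hw
    have hw0 : πx w = 0 := by
      have := LinearMap.mem_ker.mp hw
      rwa [AlgHom.toLinearMap_apply] at this
    set p : TensorAlgebra k L →ₗ[k] Module.End k (TensorAlgebra k F) := πx.toLinearMap with hp
    set φ : Module.End k (TensorAlgebra k F) →ₗ[k] Module.Dual k (TensorAlgebra k F) :=
      LinearMap.llcomp k (TensorAlgebra k F) (TensorAlgebra k F) k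
        (counitTensorAlgebra k F).toLinearMap with hφ
    have hφapp : ∀ (E : Module.End k (TensorAlgebra k F)) (v : TensorAlgebra k F),
        φ E v = counitTensorAlgebra k F (E v) := fun E v => rfl
    set rr : Module.Dual k (TensorAlgebra k F) →ₗ[k] Module.End k (TensorAlgebra k F) :=
      { toFun := fun ψ => (TensorProduct.lid k (TensorAlgebra k F)).toLinearMap ∘ₗ
          LinearMap.rTensor (TensorAlgebra k F) ψ ∘ₗ (comulTensorAlgebra k F).toLinearMap
        map_add' := by
          intro ψ ψ'
          rw [LinearMap.rTensor_add, LinearMap.add_comp, LinearMap.comp_add]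
        map_smul' := by
          intro c ψ
          rw [LinearMap.rTensor_smul, LinearMap.smul_comp, LinearMap.comp_smul,
            RingHom.id_apply] } with hrr
    have hretr : ∀ u : TensorAlgebra k L, rr (φ (p u)) = πx u := by
      intro u
      apply LinearMap.ext fun v => ?_
      show (TensorProduct.lid k (TensorAlgebra k F))
        ((LinearMap.rTensor (TensorAlgebra k F)
          ((counitTensorAlgebra k F).toLinearMap ∘ₗ (πx u)))
            ((comulTensorAlgebra k F) v)) = πx u v
      exact reconstruct (πx u) (pix_rightInvariant x hx X hX1 hX2 hX3 πx hπx u) v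
    obtain ⟨S, hS⟩ := TensorProduct.exists_finset (comulTensorAlgebra k L w)
    have hzero : ∀ v u : TensorAlgebra k F,
        LinearMap.mul' k k (TensorProduct.map (LinearMap.applyₗ v) (LinearMap.applyₗ u)
          (TensorProduct.map (φ ∘ₗ p) (φ ∘ₗ p) (comulTensorAlgebra k L w))) = 0 := by
      intro v u
      have e1 : LinearMap.mul' k k (TensorProduct.map (LinearMap.applyₗ v) (LinearMap.applyₗ u)
          (TensorProduct.map (φ ∘ₗ p) (φ ∘ₗ p) (comulTensorAlgebra k L w))) =
          ∑ q ∈ S, counitTensorAlgebra k F (πx q.1 v) * counitTensorAlgebra k F (πx q.2 u) := by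
        rw [hS]
        simp only [map_sum, TensorProduct.map_tmul, LinearMap.comp_apply,
          LinearMap.applyₗ_apply_apply, LinearMap.mul'_apply, hφapp, hp,
          AlgHom.toLinearMap_apply]
      have e2 : ∑ q ∈ S, counitTensorAlgebra k F (πx q.1 v) * counitTensorAlgebra k F (πx q.2 u)
          = counitTensorAlgebra k F (∑ q ∈ S, (πx q.1 v) * (πx q.2 u)) := by
        rw [map_sum]
        exact Finset.sum_congr rfl fun q _ => (map_mul _ _ _).symm
      have e3 : ∑ q ∈ S, (πx q.1 v) * (πx q.2 u) =
          LinearMap.mul' k (TensorAlgebra k F)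
            (TensorProduct.map (LinearMap.applyₗ v ∘ₗ πx.toLinearMap)
              (LinearMap.applyₗ u ∘ₗ πx.toLinearMap) (comulTensorAlgebra k L w)) := by
        rw [hS]
        simp only [map_sum, TensorProduct.map_tmul, LinearMap.comp_apply,
          LinearMap.applyₗ_apply_apply, LinearMap.mul'_apply, AlgHom.toLinearMap_apply]
      rw [e1, e2, e3, ← pix_prod x X hX3 πx hπx w v u, hw0]
      simp
    have ht' : TensorProduct.map (φ ∘ₗ p) (φ ∘ₗ p) (comulTensorAlgebra k L w) = 0 :=
      dual_tensor_sep _ hzero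
    have hmain : TensorProduct.map p p (comulTensorAlgebra k L w) = 0 := by
      have h5 : TensorProduct.map p p (comulTensorAlgebra k L w) =
          TensorProduct.map (rr ∘ₗ (φ ∘ₗ p)) (rr ∘ₗ (φ ∘ₗ p)) (comulTensorAlgebra k L w) := by
        rw [hS, map_sum, map_sum]
        refine Finset.sum_congr rfl fun q _ => ?_
        rw [TensorProduct.map_tmul, TensorProduct.map_tmul, LinearMap.comp_apply,
          LinearMap.comp_apply, LinearMap.comp_apply, LinearMap.comp_apply,
          hretr q.1, hretr q.2]
        rfl
      rw [h5, TensorProduct.map_comp, LinearMap.comp_apply, ht', map_zero]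
    exact mem_sup_of_map_eq_zero p _ hmain
  · intro w hw
    have hw0 : πx w = 0 := by
      have := LinearMap.mem_ker.mp hw
      rwa [AlgHom.toLinearMap_apply] at this
    have h1 := pix_one X hX1 πx hπx w
    rw [hw0, LinearMap.zero_apply] at h1
    rcases smul_eq_zero.mp h1.symm with h | h
    · exact h
    · exact absurd h one_ne_zero
end

section
/- Let L and F be finite-dimensional coalgebras over a field k, let x : L → End(F) be a linear map whose values are right invariant operators on F, and let π_x : T(L) → End(T(F)) be the associated algebra homomorphism. Let C ⊆ T(L) be any subcoalgebra, i.e. a linear subspace with Δ_{T(L)}(C) contained in the image of C ⊗ C in T(L) ⊗ T(L). Then ker(π_x) ∩ C is a coideal of C: Δ_{T(L)}(ker(π_x) ∩ C) ⊆ (ker(π_x) ∩ C) ⊗ C + C ⊗ (ker(π_x) ∩ C) (as subspaces of T(L) ⊗ T(L)). -/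
open TensorProduct

set_option linter.unusedSectionVars false


/-- Separation: if families of functionals jointly separate points of `U` and `V`, and
all `(H i ⊗ G j)` kill `s`, then `s = 0`. -/
lemma aux_separation {k U V ι' : Type*} [Field k] [AddCommGroup U] [Module k U]
    [AddCommGroup V] [Module k V]
    (H : ι' → (U →ₗ[k] k)) (G : ι' → (V →ₗ[k] k))
    (hU : ∀ u : U, (∀ i, H i u = 0) → u = 0)
    (hV : ∀ v : V, (∀ j, G j v = 0) → v = 0)
    (s : U ⊗[k] V)
    (hs : ∀ i j, LinearMap.mul' k k (TensorProduct.map (H i) (G j) s) = 0) :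
    s = 0 := by
  classical
  let b : Module.Basis _ k V := Module.Basis.ofVectorSpace k V
  let e : U ⊗[k] V ≃ₗ[k] (_ →₀ U) :=
    (LinearEquiv.lTensor U b.repr).trans (finsuppScalarRight k k U _)
  suffices h : e s = 0 by
    have := congrArg e.symm h
    simpa using this
  -- first: for each i, the contraction of s by H i on the left is 0
  have key : ∀ i, ((TensorProduct.lid k V).toLinearMap ∘ₗ LinearMap.rTensor V (H i)) s = 0 := by
    intro i
    apply hV
    intro j
    have : (G j) ∘ₗ ((TensorProduct.lid k V).toLinearMap ∘ₗ LinearMap.rTensor V (H i))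
        = (LinearMap.mul' k k) ∘ₗ TensorProduct.map (H i) (G j) := by
      apply TensorProduct.ext'
      intro u v
      simp [LinearMap.mul'_apply]
    have := LinearMap.congr_fun this s
    simp only [LinearMap.comp_apply] at this
    simp only [LinearMap.comp_apply]
    rw [this]
    exact hs i j
  -- coordinates
  have coord : ∀ i a, H i ((e s) a) = 0 := by
    intro i a
    have hrepr : ∀ c : (_ →₀ U),
        b.repr (((TensorProduct.lid k V).toLinearMap ∘ₗ LinearMap.rTensor V (H i)) (e.symm c))
          = c.mapRange (H i) (map_zero _) := by
      intro c
      have : (b.repr.toLinearMap ∘ₗ ((TensorProduct.lid k V).toLinearMap ∘ₗ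
            LinearMap.rTensor V (H i)) ∘ₗ (e.symm : (_ →₀ U) →ₗ[k] U ⊗[k] V))
          = Finsupp.mapRange.linearMap (H i) := by
        apply Finsupp.lhom_ext
        intro a u
        have he : e.symm (Finsupp.single a u) = u ⊗ₜ[k] b a := by
          simp only [e, LinearEquiv.trans_symm, LinearEquiv.trans_apply,
            finsuppScalarRight_symm_apply_single]
          simp [b]
        simp [he]
      exact LinearMap.congr_fun this c
    have h2 := hrepr (e s)
    rw [e.symm_apply_apply] at h2
    rw [key i] at h2
    have := congrArg (fun f => f a) h2
    simpa using this.symm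
  ext a
  exact hU _ (fun i => coord i a)

/-- Core: an element of `V ⊗ V` killed by all `H i ⊗ H j` lies in `K₀ ⊗ V + V ⊗ K₀`
where `K₀` is the common kernel of the `H i`. -/
lemma aux_core {k V ι' : Type*} [Field k] [AddCommGroup V] [Module k V]
    (H : ι' → (V →ₗ[k] k)) (K₀ : Submodule k V)
    (hK : ∀ v, v ∈ K₀ ↔ ∀ i, H i v = 0)
    (t : V ⊗[k] V)
    (ht : ∀ i j, LinearMap.mul' k k (TensorProduct.map (H i) (H j) t) = 0) :
    t ∈ LinearMap.range (TensorProduct.map K₀.subtype (LinearMap.id (M := V))) ⊔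
        LinearMap.range (TensorProduct.map (LinearMap.id (M := V)) K₀.subtype) := by
  obtain ⟨W, hW⟩ := K₀.exists_isCompl
  set prK : V →ₗ[k] K₀ := Submodule.linearProjOfIsCompl K₀ W hW with hprK
  set prW : V →ₗ[k] W := Submodule.linearProjOfIsCompl W K₀ hW.symm with hprW
  set pK : V →ₗ[k] V := K₀.subtype ∘ₗ prK with hpK
  set pW : V →ₗ[k] V := W.subtype ∘ₗ prW with hpW
  have hsum : pK + pW = LinearMap.id := by
    ext v
    exact Submodule.projection_add_projection_eq_self hW v
  -- H i kills pK, so H i ∘ pW = H i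
  have hHpW : ∀ i, (H i) ∘ₗ pW = H i := by
    intro i
    ext v
    have h1 : H i (pK v) = 0 := ((hK _).1 (Subtype.coe_prop (prK v))) i
    have h2 : pK v + pW v = v := LinearMap.congr_fun hsum v
    calc H i (pW v) = H i (pK v + pW v) := by rw [map_add, h1, zero_add]
    _ = H i v := by rw [h2]
  -- decompose t
  have hdec : t = TensorProduct.map pK LinearMap.id t
      + TensorProduct.map pW pK t + TensorProduct.map pW pW t := by
    have : TensorProduct.map (LinearMap.id (M := V)) (LinearMap.id (M := V)) t = t := by simp
    calc t = TensorProduct.map (pK + pW) (pK + pW) t := by rw [hsum]; simp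
    _ = _ := by
        rw [TensorProduct.map_add_left, TensorProduct.map_add_right,
          TensorProduct.map_add_right]
        simp only [LinearMap.add_apply]
        have h1 : TensorProduct.map pK pK t + TensorProduct.map pK pW t
            = TensorProduct.map pK LinearMap.id t := by
          rw [← LinearMap.add_apply, ← TensorProduct.map_add_right, hsum]
        rw [← h1]
        abel
  -- third piece is zero
  have hWW : TensorProduct.map pW pW t = 0 := by
    have hfac : TensorProduct.map pW pW
        = TensorProduct.map W.subtype W.subtype ∘ₗ TensorProduct.map prW prW := by
      rw [← TensorProduct.map_comp]
    have hs' : TensorProduct.map prW prW t = 0 := by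
      apply aux_separation (fun i => (H i) ∘ₗ W.subtype) (fun i => (H i) ∘ₗ W.subtype)
      · intro u hu
        have : (u : V) ∈ K₀ := (hK _).2 hu
        have : (u : V) ∈ K₀ ⊓ W := ⟨this, u.2⟩
        rw [hW.inf_eq_bot] at this
        exact Subtype.ext this
      · intro u hu
        have : (u : V) ∈ K₀ := (hK _).2 hu
        have : (u : V) ∈ K₀ ⊓ W := ⟨this, u.2⟩
        rw [hW.inf_eq_bot] at this
        exact Subtype.ext this
      · intro i j
        have : TensorProduct.map ((H i) ∘ₗ W.subtype) ((H j) ∘ₗ W.subtype)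
            (TensorProduct.map prW prW t) = TensorProduct.map (H i) (H j) t := by
          rw [← LinearMap.comp_apply, ← TensorProduct.map_comp,
            LinearMap.comp_assoc, LinearMap.comp_assoc, ← hpW, hHpW, hHpW]
        rw [this]; exact ht i j
    rw [hfac, LinearMap.comp_apply, hs', map_zero]
  rw [hdec, hWW, add_zero]
  apply Submodule.add_mem
  · apply Submodule.mem_sup_left
    have : TensorProduct.map pK (LinearMap.id (M := V))
        = TensorProduct.map K₀.subtype LinearMap.id ∘ₗ TensorProduct.map prK LinearMap.id := by
      rw [← TensorProduct.map_comp]; simp; rfl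
    rw [this]
    exact ⟨TensorProduct.map prK LinearMap.id t, rfl⟩
  · apply Submodule.mem_sup_right
    have : TensorProduct.map pW pK
        = TensorProduct.map (LinearMap.id (M := V)) K₀.subtype
            ∘ₗ TensorProduct.map pW prK := by
      rw [← TensorProduct.map_comp]; simp; rfl
    rw [this]
    exact ⟨TensorProduct.map pW prK t, rfl⟩

section
variable (k F : Type*) [Field k] [AddCommGroup F] [Module k F] [Coalgebra k F]

noncomputable def epsTA : TensorAlgebra k F →ₐ[k] k :=
  TensorAlgebra.lift k (Coalgebra.counit (R := k) (A := F))

noncomputable def cLmap : TensorAlgebra k F ⊗[k] TensorAlgebra k F →ₗ[k] TensorAlgebra k F :=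
  (TensorProduct.lid k _).toLinearMap ∘ₗ LinearMap.rTensor _ (epsTA k F).toLinearMap

lemma comulTensorAlgebra_ι (f : F) :
    comulTensorAlgebra k F (TensorAlgebra.ι k f) =
      TensorProduct.map (TensorAlgebra.ι k) (TensorAlgebra.ι k) (Coalgebra.comul f) := by
  simp [comulTensorAlgebra, TensorAlgebra.lift_ι_apply]

lemma cLmap_comul (u : TensorAlgebra k F) : cLmap k F (comulTensorAlgebra k F u) = u := by
  let cLa : TensorAlgebra k F ⊗[k] TensorAlgebra k F →ₐ[k] TensorAlgebra k F :=
    (Algebra.TensorProduct.lid k (TensorAlgebra k F)).toAlgHom.comp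
      (Algebra.TensorProduct.map (epsTA k F) (AlgHom.id k (TensorAlgebra k F)))
  have h1 : cLmap k F = cLa.toLinearMap := by
    apply TensorProduct.ext'
    intro a b
    simp [cLmap, cLa, Algebra.TensorProduct.lid_tmul]
  have h2 : cLa.comp (comulTensorAlgebra k F) = AlgHom.id k (TensorAlgebra k F) := by
    apply TensorAlgebra.hom_ext
    apply LinearMap.ext
    intro f
    have gmaps : (cLmap k F) ∘ₗ (TensorProduct.map (TensorAlgebra.ι k) (TensorAlgebra.ι k) :
          F ⊗[k] F →ₗ[k] _)
        = (TensorAlgebra.ι k (M := F)) ∘ₗ ((TensorProduct.lid k F).toLinearMap ∘ₗ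
            LinearMap.rTensor F (Coalgebra.counit (R := k))) := by
      apply TensorProduct.ext'
      intro f₁ f₂
      simp [cLmap, epsTA, TensorAlgebra.lift_ι_apply]
    have step : (cLmap k F) (TensorProduct.map (TensorAlgebra.ι k) (TensorAlgebra.ι k)
        (Coalgebra.comul (R := k) f)) = TensorAlgebra.ι k f := by
      rw [← LinearMap.comp_apply, gmaps]
      simp only [LinearMap.comp_apply]
      rw [Coalgebra.rTensor_counit_comul]
      simp
    simp only [AlgHom.comp_toLinearMap, LinearMap.comp_apply, AlgHom.toLinearMap_apply,
      AlgHom.coe_id, id_eq]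
    rw [comulTensorAlgebra_ι] at *
    rw [h1] at step
    exact step
  calc cLmap k F (comulTensorAlgebra k F u) = cLa (comulTensorAlgebra k F u) := by rw [h1]; rfl
  _ = u := by
      have := congrArg (fun φ => φ u) (congrArg AlgHom.toLinearMap h2)
      simpa using this
end

section main
variable {k L F : Type*} [Field k]
    [AddCommGroup L] [Module k L] [Coalgebra k L]
    [AddCommGroup F] [Module k F] [Coalgebra k F]
    (x : L →ₗ[k] Module.End k F)
    (X : L →ₗ[k] Module.End k (TensorAlgebra k F))

set_option synthInstance.maxHeartbeats 1000000 in
set_option maxHeartbeats 1000000 in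
/-- key algebraic identity following from hX3 -/
lemma aux_P3
    (hX3 : ∀ (l : L) (w₁ w₂ : TensorAlgebra k F), X l (w₁ * w₂) =
      LinearMap.mul' k (TensorAlgebra k F)
        (TensorProduct.map (LinearMap.applyₗ w₁ ∘ₗ X) (LinearMap.applyₗ w₂ ∘ₗ X)
          (Coalgebra.comul (R := k) l)))
    (l : L) (s t : TensorAlgebra k F ⊗[k] TensorAlgebra k F) :
    LinearMap.mul' k (TensorAlgebra k F ⊗[k] TensorAlgebra k F)
      ((TensorProduct.homTensorHomMap (RingHom.id k) _ _ _ _)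
        (TensorProduct.map (LinearMap.rTensorHom (TensorAlgebra k F) ∘ₗ X)
          (LinearMap.rTensorHom (TensorAlgebra k F) ∘ₗ X) (Coalgebra.comul (R := k) l))
        (s ⊗ₜ[k] t))
    = LinearMap.rTensor (TensorAlgebra k F) (X l) (s * t) := by
  have key : (LinearMap.mul' k (TensorAlgebra k F ⊗[k] TensorAlgebra k F)) ∘ₗ
      ((TensorProduct.homTensorHomMap (RingHom.id k) _ _ _ _)
        (TensorProduct.map (LinearMap.rTensorHom (TensorAlgebra k F) ∘ₗ X)
          (LinearMap.rTensorHom (TensorAlgebra k F) ∘ₗ X) (Coalgebra.comul (R := k) l)))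
      = (LinearMap.rTensor (TensorAlgebra k F) (X l)) ∘ₗ
          (LinearMap.mul' k (TensorAlgebra k F ⊗[k] TensorAlgebra k F)) := by
    apply TensorProduct.ext_fourfold'
    intro s₁ s₂ t₁ t₂
    simp only [LinearMap.comp_apply, LinearMap.mul'_apply, Algebra.TensorProduct.tmul_mul_tmul,
      LinearMap.rTensor_tmul]
    rw [hX3 l s₁ t₁]
    -- both sides now linear in comul l
    set c := Coalgebra.comul (R := k) l with hc
    have inner : ∀ c' : L ⊗[k] L,
        LinearMap.mul' k (TensorAlgebra k F ⊗[k] TensorAlgebra k F)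
          ((TensorProduct.homTensorHomMap (RingHom.id k) _ _ _ _)
            (TensorProduct.map (LinearMap.rTensorHom (TensorAlgebra k F) ∘ₗ X)
              (LinearMap.rTensorHom (TensorAlgebra k F) ∘ₗ X) c') ((s₁ ⊗ₜ[k] s₂) ⊗ₜ (t₁ ⊗ₜ[k] t₂)))
        = (LinearMap.mul' k (TensorAlgebra k F)
            (TensorProduct.map (LinearMap.applyₗ s₁ ∘ₗ X) (LinearMap.applyₗ t₁ ∘ₗ X) c'))
            ⊗ₜ[k] (s₂ * t₂) := by
      intro c'
      induction c' using TensorProduct.induction_on with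
      | zero => simp only [map_zero, LinearMap.zero_apply, TensorProduct.zero_tmul]
      | tmul l₁ l₂ =>
          simp [TensorProduct.homTensorHomMap_apply, LinearMap.mul'_apply,
            Algebra.TensorProduct.tmul_mul_tmul, TensorProduct.add_tmul]
      | add c₁ c₂ h₁ h₂ =>
          simp only [map_add, LinearMap.add_apply, TensorProduct.add_tmul] at *
          rw [h₁, h₂]
    exact inner c
  have := LinearMap.congr_fun key (s ⊗ₜ[k] t)
  simpa [LinearMap.mul'_apply] using this

set_option synthInstance.maxHeartbeats 1000000 in
set_option maxHeartbeats 1000000 in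
/-- Right invariance of `X l` on `T(F)`. -/
lemma aux_rightInv
    (hx : ∀ l : L, Coalgebra.comul ∘ₗ (x l : F →ₗ[k] F) =
      TensorProduct.map (x l) LinearMap.id ∘ₗ Coalgebra.comul)
    (hX1 : ∀ l : L, X l 1 = Coalgebra.counit (R := k) l • (1 : TensorAlgebra k F))
    (hX2 : ∀ (l : L) (f : F), X l (TensorAlgebra.ι k f) = TensorAlgebra.ι k (x l f))
    (hX3 : ∀ (l : L) (w₁ w₂ : TensorAlgebra k F), X l (w₁ * w₂) =
      LinearMap.mul' k (TensorAlgebra k F)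
        (TensorProduct.map (LinearMap.applyₗ w₁ ∘ₗ X) (LinearMap.applyₗ w₂ ∘ₗ X)
          (Coalgebra.comul (R := k) l)))
    (u : TensorAlgebra k F) :
    ∀ l : L, comulTensorAlgebra k F (X l u) = LinearMap.rTensor (TensorAlgebra k F) (X l)
      (comulTensorAlgebra k F u) := by
  induction u using TensorAlgebra.induction with
  | algebraMap r =>
      intro l
      simp only [Algebra.algebraMap_eq_smul_one, map_smul, hX1, map_one,
        Algebra.TensorProduct.one_def, LinearMap.rTensor_tmul, TensorProduct.smul_tmul']
  | ι f =>
      intro l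
      have hcomm : (TensorProduct.map (TensorAlgebra.ι k) (TensorAlgebra.ι k)) ∘ₗ
          (TensorProduct.map (x l) (LinearMap.id (M := F)))
          = (LinearMap.rTensor (TensorAlgebra k F) (X l)) ∘ₗ
            (TensorProduct.map (TensorAlgebra.ι k) (TensorAlgebra.ι k)) := by
        apply TensorProduct.ext'
        intro f₁ f₂
        simp [hX2]
      rw [hX2, comulTensorAlgebra_ι, comulTensorAlgebra_ι]
      have hxf : Coalgebra.comul (R := k) ((x l) f)
          = TensorProduct.map (x l) LinearMap.id (Coalgebra.comul (R := k) f) := by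
        have := LinearMap.congr_fun (hx l) f
        simpa using this
      rw [hxf]
      rw [← LinearMap.comp_apply, hcomm]
      rfl
  | mul a b ha hb =>
      intro l
      have hm1 : comulTensorAlgebra k F (X l (a * b)) =
          ((comulTensorAlgebra k F).toLinearMap ∘ₗ (LinearMap.mul' k (TensorAlgebra k F)) ∘ₗ
            TensorProduct.map (LinearMap.applyₗ a ∘ₗ X) (LinearMap.applyₗ b ∘ₗ X))
            (Coalgebra.comul (R := k) l) := by
        rw [hX3]; rfl
      have hmaps : ((comulTensorAlgebra k F).toLinearMap ∘ₗ (LinearMap.mul' k (TensorAlgebra k F)) ∘ₗ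
            TensorProduct.map (LinearMap.applyₗ a ∘ₗ X) (LinearMap.applyₗ b ∘ₗ X))
          = (LinearMap.mul' k (TensorAlgebra k F ⊗[k] TensorAlgebra k F)) ∘ₗ
            (LinearMap.applyₗ (comulTensorAlgebra k F a ⊗ₜ[k] comulTensorAlgebra k F b)) ∘ₗ
            (TensorProduct.homTensorHomMap (RingHom.id k) _ _ _ _) ∘ₗ
            (TensorProduct.map (LinearMap.rTensorHom (TensorAlgebra k F) ∘ₗ X)
              (LinearMap.rTensorHom (TensorAlgebra k F) ∘ₗ X)) := by
        apply TensorProduct.ext'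
        intro l₁ l₂
        simp only [LinearMap.comp_apply, TensorProduct.map_tmul, LinearMap.mul'_apply,
          LinearMap.applyₗ_apply_apply, TensorProduct.homTensorHomMap_apply, map_mul,
          AlgHom.toLinearMap_apply, LinearMap.coe_rTensorHom]
        rw [ha l₁, hb l₂]
      rw [hm1, hmaps]
      simp only [LinearMap.comp_apply]
      rw [map_mul]
      exact aux_P3 X hX3 l (comulTensorAlgebra k F a) (comulTensorAlgebra k F b)
  | add a b ha hb =>
      intro l
      simp only [map_add, LinearMap.add_apply, ha l, hb l]

variable (πx : TensorAlgebra k L →ₐ[k] Module.End k (TensorAlgebra k F))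

set_option synthInstance.maxHeartbeats 1000000 in
set_option maxHeartbeats 1000000 in
lemma aux_rightInv_pi
    (hx : ∀ l : L, Coalgebra.comul ∘ₗ (x l : F →ₗ[k] F) =
      TensorProduct.map (x l) LinearMap.id ∘ₗ Coalgebra.comul)
    (hX1 : ∀ l : L, X l 1 = Coalgebra.counit (R := k) l • (1 : TensorAlgebra k F))
    (hX2 : ∀ (l : L) (f : F), X l (TensorAlgebra.ι k f) = TensorAlgebra.ι k (x l f))
    (hX3 : ∀ (l : L) (w₁ w₂ : TensorAlgebra k F), X l (w₁ * w₂) =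
      LinearMap.mul' k (TensorAlgebra k F)
        (TensorProduct.map (LinearMap.applyₗ w₁ ∘ₗ X) (LinearMap.applyₗ w₂ ∘ₗ X)
          (Coalgebra.comul (R := k) l)))
    (hπx : ∀ l : L, πx (TensorAlgebra.ι k l) = X l)
    (w : TensorAlgebra k L) :
    ∀ u : TensorAlgebra k F, comulTensorAlgebra k F (πx w u)
      = LinearMap.rTensor (TensorAlgebra k F) (πx w) (comulTensorAlgebra k F u) := by
  induction w using TensorAlgebra.induction with
  | algebraMap r =>
      intro u
      have h1 : πx ((algebraMap k (TensorAlgebra k L)) r) = r • (1 : Module.End k (TensorAlgebra k F)) := by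
        rw [AlgHom.commutes, Algebra.algebraMap_eq_smul_one]
      rw [h1]
      simp only [LinearMap.smul_apply, Module.End.one_apply, map_smul,
        LinearMap.rTensor_smul, Module.End.one_eq_id, LinearMap.rTensor_id,
        LinearMap.id_apply]
  | ι l =>
      intro u
      rw [hπx]
      exact aux_rightInv x X hx hX1 hX2 hX3 u l
  | mul w₁ w₂ h₁ h₂ =>
      intro u
      rw [map_mul, Module.End.mul_apply, h₁, h₂, ← LinearMap.comp_apply, ← LinearMap.rTensor_comp]
      rfl
  | add w₁ w₂ h₁ h₂ =>
      intro u
      simp only [map_add, LinearMap.add_apply, h₁ u, h₂ u, LinearMap.rTensor_add]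

lemma aux_ker_char
    (hx : ∀ l : L, Coalgebra.comul ∘ₗ (x l : F →ₗ[k] F) =
      TensorProduct.map (x l) LinearMap.id ∘ₗ Coalgebra.comul)
    (hX1 : ∀ l : L, X l 1 = Coalgebra.counit (R := k) l • (1 : TensorAlgebra k F))
    (hX2 : ∀ (l : L) (f : F), X l (TensorAlgebra.ι k f) = TensorAlgebra.ι k (x l f))
    (hX3 : ∀ (l : L) (w₁ w₂ : TensorAlgebra k F), X l (w₁ * w₂) =
      LinearMap.mul' k (TensorAlgebra k F)
        (TensorProduct.map (LinearMap.applyₗ w₁ ∘ₗ X) (LinearMap.applyₗ w₂ ∘ₗ X)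
          (Coalgebra.comul (R := k) l)))
    (hπx : ∀ l : L, πx (TensorAlgebra.ι k l) = X l)
    (w : TensorAlgebra k L)
    (h0 : ∀ u : TensorAlgebra k F, epsTA k F (πx w u) = 0) :
    πx w = 0 := by
  ext u
  have h1 : πx w u = cLmap k F (comulTensorAlgebra k F (πx w u)) := (cLmap_comul k F _).symm
  rw [h1, aux_rightInv_pi x X πx hx hX1 hX2 hX3 hπx w u]
  have h2 : (cLmap k F) ∘ₗ LinearMap.rTensor (TensorAlgebra k F) (πx w : TensorAlgebra k F →ₗ[k] TensorAlgebra k F) = 0 := by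
    have heps : (epsTA k F).toLinearMap ∘ₗ (πx w : TensorAlgebra k F →ₗ[k] TensorAlgebra k F) = 0 := by
      ext u'; exact h0 u'
    rw [cLmap, LinearMap.comp_assoc, ← LinearMap.rTensor_comp, heps]
    simp
  rw [← LinearMap.comp_apply, h2]
  rfl

set_option synthInstance.maxHeartbeats 1000000 in
set_option maxHeartbeats 1000000 in
lemma aux_P
    (hX3 : ∀ (l : L) (w₁ w₂ : TensorAlgebra k F), X l (w₁ * w₂) =
      LinearMap.mul' k (TensorAlgebra k F)
        (TensorProduct.map (LinearMap.applyₗ w₁ ∘ₗ X) (LinearMap.applyₗ w₂ ∘ₗ X)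
          (Coalgebra.comul (R := k) l)))
    (hπx : ∀ l : L, πx (TensorAlgebra.ι k l) = X l)
    (w : TensorAlgebra k L) :
    ∀ u v : TensorAlgebra k F, πx w (u * v) =
      LinearMap.mul' k (TensorAlgebra k F)
        (TensorProduct.map (LinearMap.applyₗ u ∘ₗ πx.toLinearMap)
          (LinearMap.applyₗ v ∘ₗ πx.toLinearMap) (comulTensorAlgebra k L w)) := by
  induction w using TensorAlgebra.induction with
  | algebraMap r =>
      intro u v
      have h1 : πx ((algebraMap k (TensorAlgebra k L)) r)
          = r • (1 : Module.End k (TensorAlgebra k F)) := by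
        rw [AlgHom.commutes, Algebra.algebraMap_eq_smul_one]
      rw [h1]
      have h2 : comulTensorAlgebra k L ((algebraMap k (TensorAlgebra k L)) r)
          = r • ((1 : TensorAlgebra k L) ⊗ₜ[k] (1 : TensorAlgebra k L)) := by
        rw [AlgHom.commutes, Algebra.algebraMap_eq_smul_one, Algebra.TensorProduct.one_def]
      rw [h2]
      simp only [map_smul, TensorProduct.map_tmul, LinearMap.smul_apply, Module.End.one_apply,
        LinearMap.comp_apply, LinearMap.applyₗ_apply_apply, AlgHom.toLinearMap_apply, map_one,
        LinearMap.mul'_apply, smul_mul_assoc]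
  | ι l =>
      intro u v
      have hcomp : ∀ u' : TensorAlgebra k F,
          (LinearMap.applyₗ u' ∘ₗ πx.toLinearMap) ∘ₗ TensorAlgebra.ι k
            = LinearMap.applyₗ u' ∘ₗ X := by
        intro u'
        ext l'
        simp [hπx]
      have hmm : TensorProduct.map (LinearMap.applyₗ u ∘ₗ πx.toLinearMap)
            (LinearMap.applyₗ v ∘ₗ πx.toLinearMap)
            ((TensorProduct.map (TensorAlgebra.ι k) (TensorAlgebra.ι k))
              (Coalgebra.comul (R := k) l))
          = TensorProduct.map (LinearMap.applyₗ u ∘ₗ X) (LinearMap.applyₗ v ∘ₗ X)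
              (Coalgebra.comul (R := k) l) := by
        rw [← LinearMap.comp_apply, ← TensorProduct.map_comp, hcomp u, hcomp v]
      rw [hπx, hX3 l u v, comulTensorAlgebra_ι, hmm]
  | mul w₁ w₂ h₁ h₂ =>
      intro u v
      have lhs1 : πx (w₁ * w₂) (u * v)
          = πx w₁ (LinearMap.mul' k (TensorAlgebra k F)
              (TensorProduct.map (LinearMap.applyₗ u ∘ₗ πx.toLinearMap)
                (LinearMap.applyₗ v ∘ₗ πx.toLinearMap) (comulTensorAlgebra k L w₂))) := by
        rw [map_mul πx w₁ w₂, Module.End.mul_apply, h₂ u v]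
      have hf : (πx w₁ : TensorAlgebra k F →ₗ[k] TensorAlgebra k F) ∘ₗ
            LinearMap.mul' k (TensorAlgebra k F) ∘ₗ
              TensorProduct.map (LinearMap.applyₗ u ∘ₗ πx.toLinearMap)
                (LinearMap.applyₗ v ∘ₗ πx.toLinearMap)
          = LinearMap.mul' k (TensorAlgebra k F) ∘ₗ
              TensorProduct.map (LinearMap.applyₗ u ∘ₗ πx.toLinearMap)
                (LinearMap.applyₗ v ∘ₗ πx.toLinearMap) ∘ₗ
              LinearMap.mulLeft k (comulTensorAlgebra k L w₁) := by
        apply TensorProduct.ext'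
        intro a b
        have hg : (LinearMap.mul' k (TensorAlgebra k F)) ∘ₗ
              TensorProduct.map (LinearMap.applyₗ (πx a u) ∘ₗ πx.toLinearMap)
                (LinearMap.applyₗ (πx b v) ∘ₗ πx.toLinearMap)
            = (LinearMap.mul' k (TensorAlgebra k F)) ∘ₗ
                TensorProduct.map (LinearMap.applyₗ u ∘ₗ πx.toLinearMap)
                  (LinearMap.applyₗ v ∘ₗ πx.toLinearMap) ∘ₗ
                LinearMap.mulRight k (a ⊗ₜ[k] b) := by
          apply TensorProduct.ext'
          intro c d
          simp only [LinearMap.comp_apply, TensorProduct.map_tmul, LinearMap.mul'_apply,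
            LinearMap.applyₗ_apply_apply, AlgHom.toLinearMap_apply,
            LinearMap.mulRight_apply, Algebra.TensorProduct.tmul_mul_tmul, map_mul,
            Module.End.mul_apply]
        simp only [LinearMap.comp_apply, TensorProduct.map_tmul, LinearMap.mul'_apply,
          LinearMap.applyₗ_apply_apply, AlgHom.toLinearMap_apply, LinearMap.mulLeft_apply]
        rw [h₁ (πx a u) (πx b v)]
        exact LinearMap.congr_fun hg (comulTensorAlgebra k L w₁)
      rw [lhs1, map_mul]
      have := LinearMap.congr_fun hf (comulTensorAlgebra k L w₂)
      simp only [LinearMap.comp_apply, LinearMap.mulLeft_apply] at this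
      exact this
  | add w₁ w₂ h₁ h₂ =>
      intro u v
      simp only [map_add, LinearMap.add_apply, h₁ u v, h₂ u v]

end main


set_option synthInstance.maxHeartbeats 1000000 in
set_option maxHeartbeats 1000000 in
/-- for any subcoalgebra `C ⊆ T(L)`, the space `ker(π_x) ∩ C` of relations
contained in `C` is a coideal of `C`. -/
theorem relations_in_subcoalgebra_coideal
    (k L F : Type*) [Field k]
    [AddCommGroup L] [Module k L] [Coalgebra k L] [FiniteDimensional k L]
    [AddCommGroup F] [Module k F] [Coalgebra k F] [FiniteDimensional k F]
    (x : L →ₗ[k] Module.End k F)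
    (hx : ∀ l : L, Coalgebra.comul ∘ₗ (x l : F →ₗ[k] F) =
      TensorProduct.map (x l) LinearMap.id ∘ₗ Coalgebra.comul)
    (X : L →ₗ[k] Module.End k (TensorAlgebra k F))
    (hX1 : ∀ l : L, X l 1 = Coalgebra.counit (R := k) l • (1 : TensorAlgebra k F))
    (hX2 : ∀ (l : L) (f : F), X l (TensorAlgebra.ι k f) = TensorAlgebra.ι k (x l f))
    (hX3 : ∀ (l : L) (w₁ w₂ : TensorAlgebra k F), X l (w₁ * w₂) =
      LinearMap.mul' k (TensorAlgebra k F)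
        (TensorProduct.map (LinearMap.applyₗ w₁ ∘ₗ X) (LinearMap.applyₗ w₂ ∘ₗ X)
          (Coalgebra.comul (R := k) l)))
    (πx : TensorAlgebra k L →ₐ[k] Module.End k (TensorAlgebra k F))
    (hπx : ∀ l : L, πx (TensorAlgebra.ι k l) = X l)
    (C : Submodule k (TensorAlgebra k L))
    (hC : ∀ c ∈ C, comulTensorAlgebra k L c ∈
      LinearMap.range (TensorProduct.map C.subtype C.subtype)) :
    ∀ w ∈ LinearMap.ker πx.toLinearMap ⊓ C,
      comulTensorAlgebra k L w ∈
        LinearMap.range (TensorProduct.map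
          (LinearMap.ker πx.toLinearMap ⊓ C).subtype C.subtype) ⊔
        LinearMap.range (TensorProduct.map
          C.subtype (LinearMap.ker πx.toLinearMap ⊓ C).subtype) := by
  intro w hw
  obtain ⟨hwK, hwC⟩ := hw
  obtain ⟨t, ht⟩ := hC w hwC
  have hw0 : πx w = 0 := LinearMap.mem_ker.1 hwK
  -- the functionals
  set g : TensorAlgebra k F → (TensorAlgebra k L →ₗ[k] k) := fun u =>
    (epsTA k F).toLinearMap ∘ₗ LinearMap.applyₗ u ∘ₗ πx.toLinearMap with hg
  set H : TensorAlgebra k F → (↥C →ₗ[k] k) := fun u => g u ∘ₗ C.subtype with hH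
  set K₀ : Submodule k ↥C := (LinearMap.ker πx.toLinearMap).comap C.subtype with hK₀
  have hK : ∀ c : ↥C, c ∈ K₀ ↔ ∀ u, H u c = 0 := by
    intro c
    constructor
    · intro hc u
      have h0 : πx (c : TensorAlgebra k L) = 0 := LinearMap.mem_ker.1 hc
      simp [hH, hg, h0]
    · intro hc
      have h0 : ∀ u, epsTA k F (πx (c : TensorAlgebra k L) u) = 0 := fun u => hc u
      have := aux_ker_char x X πx hx hX1 hX2 hX3 hπx _ h0
      exact Submodule.mem_comap.2 (LinearMap.mem_ker.2 (by
        simpa [AlgHom.toLinearMap_apply] using this))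
  have hQ : (epsTA k F).toLinearMap ∘ₗ LinearMap.mul' k (TensorAlgebra k F)
      = LinearMap.mul' k k ∘ₗ
          TensorProduct.map (epsTA k F).toLinearMap (epsTA k F).toLinearMap := by
    apply TensorProduct.ext'
    intro a b
    simp [LinearMap.mul'_apply]
  have ht' : ∀ u v, LinearMap.mul' k k (TensorProduct.map (H u) (H v) t) = 0 := by
    intro u v
    have e1 : TensorProduct.map (H u) (H v) t
        = TensorProduct.map (g u) (g v) (comulTensorAlgebra k L w) := by
      rw [← ht, hH]
      rw [← LinearMap.comp_apply, ← TensorProduct.map_comp]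
    have e2 : LinearMap.mul' k k (TensorProduct.map (g u) (g v) (comulTensorAlgebra k L w))
        = epsTA k F (πx w (u * v)) := by
      rw [aux_P X πx hX3 hπx w u v, hg]
      rw [show TensorProduct.map
            ((epsTA k F).toLinearMap ∘ₗ LinearMap.applyₗ u ∘ₗ πx.toLinearMap)
            ((epsTA k F).toLinearMap ∘ₗ LinearMap.applyₗ v ∘ₗ πx.toLinearMap)
          = TensorProduct.map (epsTA k F).toLinearMap (epsTA k F).toLinearMap ∘ₗ
              TensorProduct.map (LinearMap.applyₗ u ∘ₗ πx.toLinearMap)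
                (LinearMap.applyₗ v ∘ₗ πx.toLinearMap) from
          (TensorProduct.map_comp _ _ _ _)]
      rw [LinearMap.comp_apply, ← LinearMap.comp_apply (LinearMap.mul' k k), ← hQ]
      rfl
    rw [e1, e2, hw0]
    simp
  have hcore := aux_core H K₀ hK t ht'
  obtain ⟨t₁, ht₁, t₂, ht₂, htsum⟩ := Submodule.mem_sup.1 hcore
  obtain ⟨y₁, hy₁⟩ := ht₁
  obtain ⟨y₂, hy₂⟩ := ht₂
  have hφ : ∀ c : ↥K₀, (c : ↥C).1 ∈ LinearMap.ker πx.toLinearMap ⊓ C := by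
    intro c
    exact ⟨c.2, (c : ↥C).2⟩
  set φ : ↥K₀ →ₗ[k] ↥(LinearMap.ker πx.toLinearMap ⊓ C) :=
    LinearMap.codRestrict _ (C.subtype ∘ₗ K₀.subtype) hφ with hφdef
  have hfac : C.subtype ∘ₗ K₀.subtype
      = (LinearMap.ker πx.toLinearMap ⊓ C).subtype ∘ₗ φ := by
    ext c; rfl
  rw [← ht, ← htsum, map_add]
  apply Submodule.add_mem
  · apply Submodule.mem_sup_left
    rw [← hy₁, ← LinearMap.comp_apply, ← TensorProduct.map_comp, hfac]
    rw [TensorProduct.map_comp]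
    exact ⟨TensorProduct.map φ LinearMap.id y₁, rfl⟩
  · apply Submodule.mem_sup_right
    rw [← hy₂, ← LinearMap.comp_apply, ← TensorProduct.map_comp, hfac]
    rw [TensorProduct.map_comp]
    exact ⟨TensorProduct.map LinearMap.id φ y₂, rfl⟩
end

section
/- Let L and F be finite-dimensional coalgebras over a field k, let x : L → End(F) be a linear map whose values are right invariant operators on F, let π_x : T(L) → End(T(F)) be the associated algebra homomorphism, and let π_x¹ : T(L) → End(F) be the unique algebra homomorphism with π_x¹(1) = id and π_x¹(ι(l)) = x(l). If C ⊆ T(L) is a linear subspace such that ε_{T(L)}(C) = 0, π_x¹(C) = 0, and Δ_{T(L)}(C) ⊆ C ⊗ T(L) + T(L) ⊗ C, then C ⊆ ker(π_x); i.e. every coideal of T(L) contained in ker(ε_{T(L)}) ∩ ker(π_x¹) consists of relations of the realized bialgebra U_x. -/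
open TensorProduct

/-!
`π_x(c)` is shown to vanish on `T(F)` by induction on words. On `1` it acts by
`ε_{T(L)}(c)` and on `F` by `π_x¹(c)`; on a product, `π_x(a)(w₁ w₂)` is the product of
`(π_x ⊗ π_x)(Δ_{T(L)} a)(w₁ ⊗ w₂)`, so the coideal condition `Δ c ∈ C ⊗ T(L) + T(L) ⊗ C`
passes the vanishing on `w₁` and `w₂` to `w₁ w₂`. Each of these three formulas holds for the
generators `ι l` by the definition of `X`, and extends to all of `T(L)` because it says that
`π_x` intertwines two representations of `T(L)`.
-/

theorem TensorAlgebra.comp_eq_comp_of_ι {R M N P : Type*} [CommRing R]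
    [AddCommGroup M] [Module R M] [AddCommGroup N] [Module R N] [AddCommGroup P] [Module R P]
    (π : TensorAlgebra R M →ₐ[R] Module.End R N) (ρ : TensorAlgebra R M →ₐ[R] Module.End R P)
    (g : P →ₗ[R] N) (h : ∀ m, π (ι R m) ∘ₗ g = g ∘ₗ ρ (ι R m)) (a : TensorAlgebra R M) :
    π a ∘ₗ g = g ∘ₗ ρ a := by
  induction a using TensorAlgebra.induction with
  | algebraMap r =>
    simp only [AlgHom.commutes, Module.algebraMap_end_eq_smul_id, LinearMap.smul_comp,
      LinearMap.comp_smul, LinearMap.id_comp, LinearMap.comp_id]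
  | ι m => exact h m
  | mul a b ha hb =>
    rw [map_mul, map_mul, Module.End.mul_eq_comp, Module.End.mul_eq_comp, LinearMap.comp_assoc,
      hb, ← LinearMap.comp_assoc, ha, LinearMap.comp_assoc]
  | add a b ha hb => rw [map_add, map_add, LinearMap.add_comp, LinearMap.comp_add, ha, hb]

theorem Module.endTensorEndAlgHom_map_apply_tmul {R A B M N : Type*} [CommRing R]
    [Ring A] [Algebra R A] [Ring B] [Algebra R B]
    [AddCommGroup M] [Module R M] [AddCommGroup N] [Module R N]
    (f : A →ₐ[R] Module.End R M) (g : B →ₐ[R] Module.End R N) (t : A ⊗[R] B) (m : M) (n : N) :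
    Module.endTensorEndAlgHom (R := R) (S := R) (A := R) (Algebra.TensorProduct.map f g t)
      (m ⊗ₜ n) = TensorProduct.map (LinearMap.applyₗ m ∘ₗ f.toLinearMap)
        (LinearMap.applyₗ n ∘ₗ g.toLinearMap) t := by
  induction t with
  | zero => simp
  | tmul a b => rfl
  | add t₁ t₂ h₁ h₂ => simp only [map_add, LinearMap.add_apply, h₁, h₂]

theorem TensorProduct.range_map_subtype_sup_le_ker_map {R A B M N : Type*} [CommRing R]
    [AddCommGroup A] [Module R A] [AddCommGroup B] [Module R B]
    [AddCommGroup M] [Module R M] [AddCommGroup N] [Module R N]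
    (f : A →ₗ[R] M) (g : B →ₗ[R] N) (C : Submodule R A) (D : Submodule R B)
    (hC : C ≤ LinearMap.ker f) (hD : D ≤ LinearMap.ker g) :
    LinearMap.range (map C.subtype (LinearMap.id : B →ₗ[R] B)) ⊔
      LinearMap.range (map (LinearMap.id : A →ₗ[R] A) D.subtype) ≤ LinearMap.ker (map f g) := by
  have hfC : f ∘ₗ C.subtype = 0 := by ext c; exact hC c.2
  have hgD : g ∘ₗ D.subtype = 0 := by ext d; exact hD d.2
  refine sup_le ?_ ?_ <;> rintro _ ⟨t, rfl⟩ <;>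
    rw [LinearMap.mem_ker, ← LinearMap.comp_apply, ← map_comp]
  · rw [hfC, map_zero_left, LinearMap.zero_apply]
  · rw [hgD, map_zero_right, LinearMap.zero_apply]

section

variable {k L : Type*} [Field k] [AddCommGroup L] [Module k L] [Coalgebra k L]

@[simp]
theorem comulTensorAlgebra_ι_s16 (l : L) :
    comulTensorAlgebra k L (TensorAlgebra.ι k l) =
      map (TensorAlgebra.ι k) (TensorAlgebra.ι k) (Coalgebra.comul l) :=
  TensorAlgebra.lift_ι_apply _ _

@[simp]
theorem counitTensorAlgebra_ι (l : L) :
    counitTensorAlgebra k L (TensorAlgebra.ι k l) = Coalgebra.counit (R := k) l :=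
  TensorAlgebra.lift_ι_apply _ _

theorem apply_eq_counitTensorAlgebra_smul {M : Type*} [AddCommGroup M] [Module k M]
    (π : TensorAlgebra k L →ₐ[k] Module.End k M) (m : M)
    (h : ∀ l, π (TensorAlgebra.ι k l) m = Coalgebra.counit (R := k) l • m)
    (a : TensorAlgebra k L) : π a m = counitTensorAlgebra k L a • m := by
  have := TensorAlgebra.comp_eq_comp_of_ι π ((Algebra.ofId k _).comp (counitTensorAlgebra k L))
    (LinearMap.toSpanSingleton k M m) (fun l => LinearMap.ext_ring (by simp [h])) a
  simpa using LinearMap.congr_fun this 1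

theorem apply_mul_eq_mul'_map_comulTensorAlgebra {A : Type*} [Ring A] [Algebra k A]
    (π : TensorAlgebra k L →ₐ[k] Module.End k A) (X : L →ₗ[k] Module.End k A)
    (hπ : ∀ l, π (TensorAlgebra.ι k l) = X l)
    (hX : ∀ (l : L) (w₁ w₂ : A), X l (w₁ * w₂) =
      LinearMap.mul' k A (map (LinearMap.applyₗ w₁ ∘ₗ X) (LinearMap.applyₗ w₂ ∘ₗ X)
        (Coalgebra.comul (R := k) l)))
    (a : TensorAlgebra k L) (w₁ w₂ : A) :
    π a (w₁ * w₂) = LinearMap.mul' k A (map (LinearMap.applyₗ w₁ ∘ₗ π.toLinearMap)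
      (LinearMap.applyₗ w₂ ∘ₗ π.toLinearMap) (comulTensorAlgebra k L a)) := by
  have hπι : π.toLinearMap ∘ₗ TensorAlgebra.ι k = X := LinearMap.ext hπ
  let ρ := Module.endTensorEndAlgHom.comp ((Algebra.TensorProduct.map π π).comp
    (comulTensorAlgebra k L))
  have hρ : ∀ b (v₁ v₂ : A), ρ b (v₁ ⊗ₜ v₂) = map (LinearMap.applyₗ v₁ ∘ₗ π.toLinearMap)
      (LinearMap.applyₗ v₂ ∘ₗ π.toLinearMap) (comulTensorAlgebra k L b) := fun _ =>
    Module.endTensorEndAlgHom_map_apply_tmul π π _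
  rw [← hρ, ← LinearMap.mul'_apply (R := k), ← LinearMap.comp_apply, ← LinearMap.comp_apply]
  refine LinearMap.congr_fun
    (TensorAlgebra.comp_eq_comp_of_ι π ρ (LinearMap.mul' k A) (fun l => ?_) a) _
  refine TensorProduct.ext' fun v₁ v₂ => ?_
  rw [LinearMap.comp_apply, LinearMap.comp_apply, LinearMap.mul'_apply, hρ, hπ, hX,
    comulTensorAlgebra_ι_s16, map_map, LinearMap.comp_assoc, LinearMap.comp_assoc, hπι]

end

theorem coideal_in_ker_counit_and_minimal_rep_is_relations_general
    (k L F : Type*) [Field k]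
    [AddCommGroup L] [Module k L] [Coalgebra k L]
    [AddCommGroup F] [Module k F]
    (x : L →ₗ[k] Module.End k F)
    (X : L →ₗ[k] Module.End k (TensorAlgebra k F))
    (hX1 : ∀ l : L, X l 1 = Coalgebra.counit (R := k) l • (1 : TensorAlgebra k F))
    (hX2 : ∀ (l : L) (f : F), X l (TensorAlgebra.ι k f) = TensorAlgebra.ι k (x l f))
    (hX3 : ∀ (l : L) (w₁ w₂ : TensorAlgebra k F), X l (w₁ * w₂) =
      LinearMap.mul' k (TensorAlgebra k F)
        (TensorProduct.map (LinearMap.applyₗ w₁ ∘ₗ X) (LinearMap.applyₗ w₂ ∘ₗ X)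
          (Coalgebra.comul (R := k) l)))
    (πx : TensorAlgebra k L →ₐ[k] Module.End k (TensorAlgebra k F))
    (hπx : ∀ l : L, πx (TensorAlgebra.ι k l) = X l)
    (πx1 : TensorAlgebra k L →ₐ[k] Module.End k F)
    (hπx1 : ∀ l : L, πx1 (TensorAlgebra.ι k l) = x l)
    (C : Submodule k (TensorAlgebra k L))
    (hCε : ∀ c ∈ C, counitTensorAlgebra k L c = 0)
    (hCπ : ∀ c ∈ C, πx1 c = 0)
    (hCΔ : ∀ c ∈ C, comulTensorAlgebra k L c ∈
      LinearMap.range (TensorProduct.map C.subtype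
        (LinearMap.id : TensorAlgebra k L →ₗ[k] TensorAlgebra k L)) ⊔
      LinearMap.range (TensorProduct.map
        (LinearMap.id : TensorAlgebra k L →ₗ[k] TensorAlgebra k L) C.subtype)) :
    ∀ c ∈ C, πx c = 0 := by
  suffices h : ∀ w, ∀ c ∈ C, πx c w = 0 from fun c hc => LinearMap.ext fun w => h w c hc
  intro w
  induction w using TensorAlgebra.induction with
  | algebraMap r =>
    intro c hc
    have h1 := apply_eq_counitTensorAlgebra_smul πx 1 (fun l => by rw [hπx, hX1]) c
    simp [Algebra.algebraMap_eq_smul_one, h1, hCε c hc]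
  | ι f =>
    intro c hc
    have hι := TensorAlgebra.comp_eq_comp_of_ι πx πx1 (TensorAlgebra.ι k)
      (fun l => LinearMap.ext fun f' => by simp [hπx, hX2, hπx1]) c
    rw [hCπ c hc, LinearMap.comp_zero] at hι
    exact LinearMap.congr_fun hι f
  | mul w₁ w₂ h₁ h₂ =>
    intro c hc
    rw [apply_mul_eq_mul'_map_comulTensorAlgebra πx X hπx hX3,
      TensorProduct.range_map_subtype_sup_le_ker_map (LinearMap.applyₗ w₁ ∘ₗ πx.toLinearMap)
        (LinearMap.applyₗ w₂ ∘ₗ πx.toLinearMap) C C h₁ h₂ (hCΔ c hc), map_zero]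
  | add w₁ w₂ h₁ h₂ =>
    intro c hc
    rw [map_add, h₁ c hc, h₂ c hc, add_zero]

/-- every coideal of `T(L)` contained in `ker ε_{T(L)} ∩ ker π_x¹`
consists of relations of the realized bialgebra `U_x`, i.e. is contained in `ker π_x`. -/
theorem coideal_in_ker_counit_and_minimal_rep_is_relations
    (k L F : Type*) [Field k]
    [AddCommGroup L] [Module k L] [Coalgebra k L] [FiniteDimensional k L]
    [AddCommGroup F] [Module k F] [Coalgebra k F] [FiniteDimensional k F]
    (x : L →ₗ[k] Module.End k F)
    (hx : ∀ l : L, Coalgebra.comul ∘ₗ (x l : F →ₗ[k] F) =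
      TensorProduct.map (x l) LinearMap.id ∘ₗ Coalgebra.comul)
    (X : L →ₗ[k] Module.End k (TensorAlgebra k F))
    (hX1 : ∀ l : L, X l 1 = Coalgebra.counit (R := k) l • (1 : TensorAlgebra k F))
    (hX2 : ∀ (l : L) (f : F), X l (TensorAlgebra.ι k f) = TensorAlgebra.ι k (x l f))
    (hX3 : ∀ (l : L) (w₁ w₂ : TensorAlgebra k F), X l (w₁ * w₂) =
      LinearMap.mul' k (TensorAlgebra k F)
        (TensorProduct.map (LinearMap.applyₗ w₁ ∘ₗ X) (LinearMap.applyₗ w₂ ∘ₗ X)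
          (Coalgebra.comul (R := k) l)))
    (πx : TensorAlgebra k L →ₐ[k] Module.End k (TensorAlgebra k F))
    (hπx : ∀ l : L, πx (TensorAlgebra.ι k l) = X l)
    (πx1 : TensorAlgebra k L →ₐ[k] Module.End k F)
    (hπx1 : ∀ l : L, πx1 (TensorAlgebra.ι k l) = x l)
    (C : Submodule k (TensorAlgebra k L))
    (hCε : ∀ c ∈ C, counitTensorAlgebra k L c = 0)
    (hCπ : ∀ c ∈ C, πx1 c = 0)
    (hCΔ : ∀ c ∈ C, comulTensorAlgebra k L c ∈
      LinearMap.range (TensorProduct.map C.subtype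
        (LinearMap.id : TensorAlgebra k L →ₗ[k] TensorAlgebra k L)) ⊔
      LinearMap.range (TensorProduct.map
        (LinearMap.id : TensorAlgebra k L →ₗ[k] TensorAlgebra k L) C.subtype)) :
    ∀ c ∈ C, πx c = 0 :=
  coideal_in_ker_counit_and_minimal_rep_is_relations_general k L F x X hX1 hX2 hX3 πx hπx πx1 hπx1 C
    hCε hCπ hCΔ
end

section
/- (First construction of the space of relations of order m.) Let L and F be finite-dimensional coalgebras over a field k, let x : L → End(F) be a linear map whose values are right invariant operators on F, let π_x : T(L) → End(T(F)) be the associated algebra homomorphism, and let π_x¹ : T(L) → End(F) be the unique algebra homomorphism with π_x¹(1) = id and π_x¹(ι(l)) = x(l). Fix m ≥ 0, regard the finite-dimensional subcoalgebra T_m(L) with its dual convolution algebra T_m(L)* (product ω₁ * ω₂ = (ω₁ ⊗ ω₂) ∘ Δ_{T(L)} restricted to T_m(L), unit the restriction of ε_{T(L)}). Let R¹_m := T_m(L) ∩ ker(π_x¹), let W_m := {φ ∈ T_m(L)* : φ vanishes on R¹_m}, and let B(W_m) be the smallest unital subalgebra of T_m(L)* containing W_m. Then {c ∈ T_m(L)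 : φ(c) = 0 for all φ ∈ B(W_m)} = T_m(L) ∩ ker(π_x), the coideal of relations of order m. -/
set_option linter.unusedSectionVars false
set_option maxHeartbeats 1000000
set_option synthInstance.maxHeartbeats 1000000

open Module


open TensorProduct

/-- `T_m(L)`: the subspace of `T(L)` spanned by `1` and products of at most `m` generators. -/
noncomputable def Tm (k L : Type*) [Field k] [AddCommGroup L] [Module k L] (m : ℕ) :
    Submodule k (TensorAlgebra k L) :=
  ∑ n ∈ Finset.range (m + 1),
    LinearMap.range (TensorAlgebra.ι k : L →ₗ[k] TensorAlgebra k L) ^ n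

section AuxDual
variable {k : Type*} [Field k]
variable {V W : Type*} [AddCommGroup V] [Module k V] [AddCommGroup W] [Module k W]

lemma aux_tensor_eq_zero_of_forall_dual [FiniteDimensional k V]
    (u : V ⊗[k] W)
    (h : ∀ (ξ : Module.Dual k V) (η : Module.Dual k W),
      LinearMap.mul' k k (TensorProduct.map ξ η u) = 0) : u = 0 := by
  set Θ : V ⊗[k] W →ₗ[k] (Module.Dual k (Module.Dual k V) ⊗[k] W) :=
    TensorProduct.map (Module.evalEquiv k V).toLinearMap LinearMap.id with hΘdef
  have key : ∀ (u : V ⊗[k] W) (ξ : Module.Dual k V) (η : Module.Dual k W),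
      η (dualTensorHom k (Module.Dual k V) W (Θ u) ξ) =
        LinearMap.mul' k k (TensorProduct.map ξ η u) := by
    intro u ξ η
    induction u using TensorProduct.induction_on with
    | zero => simp [hΘdef]
    | tmul v w =>
        simp [hΘdef, dualTensorHom_apply, LinearMap.mul'_apply, smul_eq_mul, mul_comm]
    | add a b ha hb => simp only [map_add, LinearMap.add_apply, ha, hb]
  have hzero : dualTensorHom k (Module.Dual k V) W (Θ u) = 0 := by
    ext ξ
    rw [LinearMap.zero_apply]
    exact (Module.forall_dual_apply_eq_zero_iff k _).mp fun η => by rw [key u ξ η, h ξ η]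
  -- injectivity of dualTensorHom on `Dual k V` (finite free)
  have h1 : Function.Injective (dualTensorHom k (Module.Dual k V) W) := by
    have := dualTensorHomEquivOfBasis_symm_cancel_left
      (b := Module.Free.chooseBasis k (Module.Dual k V)) (N := W)
    exact Function.LeftInverse.injective this
  have hΘu : Θ u = 0 := h1 (by rw [hzero, map_zero])
  -- injectivity of Θ
  have h2 : Function.Injective Θ := by
    have hli : Function.LeftInverse
        (TensorProduct.map (Module.evalEquiv k V).symm.toLinearMap
          (LinearMap.id : W →ₗ[k] W)) Θ := by
      intro t
      rw [hΘdef, ← LinearMap.comp_apply, ← TensorProduct.map_comp]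
      have : (Module.evalEquiv k V).symm.toLinearMap ∘ₗ (Module.evalEquiv k V).toLinearMap =
          LinearMap.id := by ext v; simp [← Module.evalEquiv_apply, LinearEquiv.symm_apply_apply]
      rw [this, LinearMap.comp_id, TensorProduct.map_id, LinearMap.id_apply]
    exact hli.injective
  exact h2 (by rw [hΘu, map_zero])

lemma aux_span_dual_eq_top [FiniteDimensional k V]
    (Φ : Set (Module.Dual k V)) (h : ∀ v : V, (∀ f ∈ Φ, f v = 0) → v = 0) :
    Submodule.span k Φ = ⊤ := by
  have hco : (Submodule.span k Φ).dualCoannihilator = ⊥ := by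
    rw [Submodule.eq_bot_iff]
    intro v hv
    rw [Submodule.mem_dualCoannihilator] at hv
    exact h v fun f hf => hv f (Submodule.subset_span hf)
  have := Subspace.dualCoannihilator_dualAnnihilator_eq (W := Submodule.span k Φ)
  rw [hco, Submodule.dualAnnihilator_bot] at this
  exact this.symm ▸ rfl

lemma aux_tensor_eq_zero_of_separating [FiniteDimensional k V] [FiniteDimensional k W]
    (u : V ⊗[k] W) (Φ : Set (Module.Dual k V)) (Ψ : Set (Module.Dual k W))
    (hΦ : ∀ v, (∀ f ∈ Φ, f v = 0) → v = 0)
    (hΨ : ∀ w, (∀ g ∈ Ψ, g w = 0) → w = 0)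
    (h : ∀ f ∈ Φ, ∀ g ∈ Ψ, LinearMap.mul' k k (TensorProduct.map f g u) = 0) : u = 0 := by
  have step1 : ∀ f ∈ Φ, ∀ η : Module.Dual k W, LinearMap.mul' k k (TensorProduct.map f η u) = 0 := by
    intro f hf η
    have hη : η ∈ Submodule.span k Ψ := by
      rw [aux_span_dual_eq_top Ψ hΨ]; exact Submodule.mem_top
    induction hη using Submodule.span_induction with
    | mem g hg => exact h f hf g hg
    | zero => rw [TensorProduct.map_zero_right]; simp
    | add g₁ g₂ _ _ h₁ h₂ => rw [TensorProduct.map_add_right]; simp [h₁, h₂]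
    | smul a g _ hg => rw [TensorProduct.map_smul_right]; simp [hg]
  apply aux_tensor_eq_zero_of_forall_dual u
  intro ξ η
  have hξ : ξ ∈ Submodule.span k Φ := by
    rw [aux_span_dual_eq_top Φ hΦ]; exact Submodule.mem_top
  induction hξ using Submodule.span_induction with
  | mem f hf => exact step1 f hf η
  | zero => rw [TensorProduct.map_zero_left]; simp
  | add f₁ f₂ _ _ h₁ h₂ => rw [TensorProduct.map_add_left]; simp [h₁, h₂]
  | smul a f _ hf => rw [TensorProduct.map_smul_left]; simp [hf]

end AuxDual


instance Tm.finiteDimensional (k L : Type*) [Field k] [AddCommGroup L] [Module k L]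
    [FiniteDimensional k L] (m : ℕ) : FiniteDimensional k ↥(Tm k L m) := by
  rw [← Submodule.fg_iff_finiteDimensional]
  unfold Tm
  apply Finset.sum_induction _ Submodule.FG
  · exact fun a b ha hb => by rw [Submodule.add_eq_sup]; exact ha.sup hb
  · rw [Submodule.zero_eq_bot]; exact Submodule.fg_bot
  · intro n _
    apply Submodule.FG.pow
    rw [← Submodule.map_top]
    exact (Module.finite_def.mp inferInstance).map _


section Core
variable {k L F : Type*} [Field k]
  [AddCommGroup L] [Module k L] [Coalgebra k L]
  [AddCommGroup F] [Module k F] [Coalgebra k F]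

lemma comul_ta_ι (f : L) :
    comulTensorAlgebra k L (TensorAlgebra.ι k f) =
      TensorProduct.map (TensorAlgebra.ι k) (TensorAlgebra.ι k) (Coalgebra.comul f) := by
  unfold comulTensorAlgebra
  rw [TensorAlgebra.lift_ι_apply]
  rfl

lemma counit_ta_ι (f : L) :
    counitTensorAlgebra k L (TensorAlgebra.ι k f) = Coalgebra.counit f := by
  unfold counitTensorAlgebra
  rw [TensorAlgebra.lift_ι_apply]

variable
  (x : L →ₗ[k] Module.End k F)
  (X : L →ₗ[k] Module.End k (TensorAlgebra k F))
  (πx : TensorAlgebra k L →ₐ[k] Module.End k (TensorAlgebra k F))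
  (πx1 : TensorAlgebra k L →ₐ[k] Module.End k F)

lemma pix_one_s17
    (hX1 : ∀ l : L, X l 1 = Coalgebra.counit (R := k) l • (1 : TensorAlgebra k F))
    (hπx : ∀ l : L, πx (TensorAlgebra.ι k l) = X l)
    (r : TensorAlgebra k L) :
    πx r 1 = counitTensorAlgebra k L r • 1 := by
  induction r using TensorAlgebra.induction with
  | algebraMap a =>
      rw [AlgHom.commutes, AlgHom.commutes]
      simp [Module.algebraMap_end_apply, Algebra.algebraMap_self]
  | ι l => rw [hπx, hX1, counit_ta_ι]
  | mul r s ihr ihs =>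
      rw [map_mul, Module.End.mul_apply, ihs, map_smul, ihr, map_mul, smul_smul, mul_comm]
  | add r s ihr ihs =>
      rw [map_add, LinearMap.add_apply, ihr, ihs, map_add, add_smul]

lemma pix_iota
    (hX2 : ∀ (l : L) (f : F), X l (TensorAlgebra.ι k f) = TensorAlgebra.ι k (x l f))
    (hπx : ∀ l : L, πx (TensorAlgebra.ι k l) = X l)
    (hπx1 : ∀ l : L, πx1 (TensorAlgebra.ι k l) = x l)
    (r : TensorAlgebra k L) :
    ∀ f : F, πx r (TensorAlgebra.ι k f) = TensorAlgebra.ι k (πx1 r f) := by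
  induction r using TensorAlgebra.induction with
  | algebraMap a =>
      intro f
      rw [AlgHom.commutes, AlgHom.commutes]
      simp [Module.algebraMap_end_apply]
  | ι l => intro f; rw [hπx, hπx1, hX2]
  | mul r s ihr ihs =>
      intro f
      rw [map_mul, Module.End.mul_apply, ihs, ihr, map_mul, Module.End.mul_apply]
  | add r s ihr ihs =>
      intro f
      rw [map_add, LinearMap.add_apply, ihr, ihs, map_add, LinearMap.add_apply, map_add]

lemma pix_mul_expand
    (hX3 : ∀ (l : L) (w₁ w₂ : TensorAlgebra k F), X l (w₁ * w₂) =
      LinearMap.mul' k (TensorAlgebra k F)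
        (TensorProduct.map (LinearMap.applyₗ w₁ ∘ₗ X) (LinearMap.applyₗ w₂ ∘ₗ X)
          (Coalgebra.comul (R := k) l)))
    (hπx : ∀ l : L, πx (TensorAlgebra.ι k l) = X l)
    (r : TensorAlgebra k L) :
    ∀ w₁ w₂ : TensorAlgebra k F,
      πx r (w₁ * w₂) = LinearMap.mul' k (TensorAlgebra k F)
        (TensorProduct.map (LinearMap.applyₗ w₁ ∘ₗ πx.toLinearMap)
          (LinearMap.applyₗ w₂ ∘ₗ πx.toLinearMap)
          (comulTensorAlgebra k L r)) := by
  induction r using TensorAlgebra.induction with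
  | algebraMap a =>
      intro w₁ w₂
      rw [AlgHom.commutes, AlgHom.commutes, Algebra.TensorProduct.algebraMap_apply,
        TensorProduct.map_tmul]
      simp [Module.algebraMap_end_apply, LinearMap.mul'_apply, smul_mul_assoc]
  | ι l =>
      intro w₁ w₂
      have h1 : (LinearMap.applyₗ w₁ ∘ₗ πx.toLinearMap) ∘ₗ
          (TensorAlgebra.ι k : L →ₗ[k] TensorAlgebra k L) = LinearMap.applyₗ w₁ ∘ₗ X := by
        ext l'; simp [hπx]
      have h2 : (LinearMap.applyₗ w₂ ∘ₗ πx.toLinearMap) ∘ₗ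
          (TensorAlgebra.ι k : L →ₗ[k] TensorAlgebra k L) = LinearMap.applyₗ w₂ ∘ₗ X := by
        ext l'; simp [hπx]
      have key : TensorProduct.map (LinearMap.applyₗ w₁ ∘ₗ πx.toLinearMap)
          (LinearMap.applyₗ w₂ ∘ₗ πx.toLinearMap)
          (TensorProduct.map (TensorAlgebra.ι k) (TensorAlgebra.ι k) (Coalgebra.comul l)) =
          TensorProduct.map (LinearMap.applyₗ w₁ ∘ₗ X) (LinearMap.applyₗ w₂ ∘ₗ X)
            (Coalgebra.comul l) := by
        rw [← LinearMap.comp_apply, ← TensorProduct.map_comp, h1, h2]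
      rw [hπx, hX3, comul_ta_ι, key]
  | mul r s ihr ihs =>
      intro w₁ w₂
      rw [map_mul πx r s, Module.End.mul_apply, ihs w₁ w₂,
        map_mul (comulTensorAlgebra k L) r s]
      have claim : ∀ t : TensorAlgebra k L ⊗[k] TensorAlgebra k L,
          πx r (LinearMap.mul' k (TensorAlgebra k F)
            (TensorProduct.map (LinearMap.applyₗ w₁ ∘ₗ πx.toLinearMap)
              (LinearMap.applyₗ w₂ ∘ₗ πx.toLinearMap) t)) =
          LinearMap.mul' k (TensorAlgebra k F)
            (TensorProduct.map (LinearMap.applyₗ w₁ ∘ₗ πx.toLinearMap)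
              (LinearMap.applyₗ w₂ ∘ₗ πx.toLinearMap)
              (comulTensorAlgebra k L r * t)) := by
        intro t
        induction t using TensorProduct.induction_on with
        | zero => simp
        | tmul s₁ s₂ =>
            rw [TensorProduct.map_tmul]
            simp only [LinearMap.comp_apply, LinearMap.applyₗ_apply_apply,
              AlgHom.toLinearMap_apply, LinearMap.mul'_apply]
            rw [ihr (πx s₁ w₁) (πx s₂ w₂)]
            have sub : ∀ v : TensorAlgebra k L ⊗[k] TensorAlgebra k L,
                LinearMap.mul' k (TensorAlgebra k F)
                  (TensorProduct.map (LinearMap.applyₗ (πx s₁ w₁) ∘ₗ πx.toLinearMap)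
                    (LinearMap.applyₗ (πx s₂ w₂) ∘ₗ πx.toLinearMap) v) =
                LinearMap.mul' k (TensorAlgebra k F)
                  (TensorProduct.map (LinearMap.applyₗ w₁ ∘ₗ πx.toLinearMap)
                    (LinearMap.applyₗ w₂ ∘ₗ πx.toLinearMap) (v * (s₁ ⊗ₜ[k] s₂))) := by
              intro v
              induction v using TensorProduct.induction_on with
              | zero => simp
              | tmul r₁ r₂ =>
                  rw [Algebra.TensorProduct.tmul_mul_tmul, TensorProduct.map_tmul,
                    TensorProduct.map_tmul]
                  simp only [LinearMap.comp_apply, LinearMap.applyₗ_apply_apply,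
                    AlgHom.toLinearMap_apply, LinearMap.mul'_apply, map_mul,
                    Module.End.mul_apply]
              | add v v' ihv ihv' =>
                  rw [map_add, map_add, add_mul, map_add, map_add, ihv, ihv']
            exact sub (comulTensorAlgebra k L r)
        | add t t' iht iht' =>
            rw [map_add, map_add, map_add, mul_add, map_add, map_add, iht, iht']
      exact claim (comulTensorAlgebra k L s)
  | add r s ihr ihs =>
      intro w₁ w₂
      rw [map_add, LinearMap.add_apply, ihr w₁ w₂, ihs w₁ w₂, map_add, map_add, map_add]

lemma rTensor_X_mul
    (hX3 : ∀ (l : L) (w₁ w₂ : TensorAlgebra k F), X l (w₁ * w₂) =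
      LinearMap.mul' k (TensorAlgebra k F)
        (TensorProduct.map (LinearMap.applyₗ w₁ ∘ₗ X) (LinearMap.applyₗ w₂ ∘ₗ X)
          (Coalgebra.comul (R := k) l)))
    (l : L) (a b : TensorAlgebra k F ⊗[k] TensorAlgebra k F) :
    LinearMap.rTensor (TensorAlgebra k F) (X l) (a * b) =
      LinearMap.mul' k (TensorAlgebra k F ⊗[k] TensorAlgebra k F)
        (TensorProduct.map
          (LinearMap.applyₗ a ∘ₗ LinearMap.rTensorHom (TensorAlgebra k F) ∘ₗ X)
          (LinearMap.applyₗ b ∘ₗ LinearMap.rTensorHom (TensorAlgebra k F) ∘ₗ X)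
          (Coalgebra.comul l)) := by
  induction a using TensorProduct.induction_on with
  | zero =>
      rw [zero_mul, map_zero]
      rw [show LinearMap.applyₗ (0 : TensorAlgebra k F ⊗[k] TensorAlgebra k F) ∘ₗ
          LinearMap.rTensorHom (TensorAlgebra k F) ∘ₗ X = 0 by ext; simp]
      rw [TensorProduct.map_zero_left, LinearMap.zero_apply, LinearMap.map_zero]
  | tmul u₁ u₂ =>
    induction b using TensorProduct.induction_on with
    | zero =>
        rw [mul_zero, map_zero]
        rw [show LinearMap.applyₗ (0 : TensorAlgebra k F ⊗[k] TensorAlgebra k F) ∘ₗ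
            LinearMap.rTensorHom (TensorAlgebra k F) ∘ₗ X = 0 by ext; simp]
        rw [TensorProduct.map_zero_right, LinearMap.zero_apply, LinearMap.map_zero]
    | tmul v₁ v₂ =>
        rw [Algebra.TensorProduct.tmul_mul_tmul, LinearMap.rTensor_tmul, hX3]
        generalize Coalgebra.comul (R := k) l = t
        induction t using TensorProduct.induction_on with
        | zero =>
            simp only [LinearMap.map_zero, TensorProduct.zero_tmul]
        | tmul l₁ l₂ =>
            simp only [TensorProduct.map_tmul, LinearMap.mul'_apply, LinearMap.comp_apply,
              LinearMap.applyₗ_apply_apply, LinearMap.coe_rTensorHom, LinearMap.rTensor_tmul,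
              Algebra.TensorProduct.tmul_mul_tmul]
        | add t t' iht iht' =>
            simp only [map_add, LinearMap.add_apply, TensorProduct.add_tmul, iht, iht']
    | add b b' ihb ihb' =>
        rw [mul_add, map_add, ihb, ihb']
        rw [show LinearMap.applyₗ (b + b') ∘ₗ LinearMap.rTensorHom (TensorAlgebra k F) ∘ₗ X =
          LinearMap.applyₗ b ∘ₗ LinearMap.rTensorHom (TensorAlgebra k F) ∘ₗ X +
          LinearMap.applyₗ b' ∘ₗ LinearMap.rTensorHom (TensorAlgebra k F) ∘ₗ X by ext; simp]
        rw [TensorProduct.map_add_right, LinearMap.add_apply, map_add]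
  | add a a' iha iha' =>
      rw [add_mul, map_add, iha, iha']
      rw [show LinearMap.applyₗ (a + a') ∘ₗ LinearMap.rTensorHom (TensorAlgebra k F) ∘ₗ X =
        LinearMap.applyₗ a ∘ₗ LinearMap.rTensorHom (TensorAlgebra k F) ∘ₗ X +
        LinearMap.applyₗ a' ∘ₗ LinearMap.rTensorHom (TensorAlgebra k F) ∘ₗ X by ext; simp]
      rw [TensorProduct.map_add_left, LinearMap.add_apply, map_add]

lemma X_rightInv
    (hx : ∀ l : L, Coalgebra.comul ∘ₗ (x l : F →ₗ[k] F) =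
      TensorProduct.map (x l) LinearMap.id ∘ₗ Coalgebra.comul)
    (hX1 : ∀ l : L, X l 1 = Coalgebra.counit (R := k) l • (1 : TensorAlgebra k F))
    (hX2 : ∀ (l : L) (f : F), X l (TensorAlgebra.ι k f) = TensorAlgebra.ι k (x l f))
    (hX3 : ∀ (l : L) (w₁ w₂ : TensorAlgebra k F), X l (w₁ * w₂) =
      LinearMap.mul' k (TensorAlgebra k F)
        (TensorProduct.map (LinearMap.applyₗ w₁ ∘ₗ X) (LinearMap.applyₗ w₂ ∘ₗ X)
          (Coalgebra.comul (R := k) l)))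
    (w : TensorAlgebra k F) :
    ∀ l : L, comulTensorAlgebra k F (X l w) =
      LinearMap.rTensor (TensorAlgebra k F) (X l) (comulTensorAlgebra k F w) := by
  induction w using TensorAlgebra.induction with
  | algebraMap a =>
      intro l
      have h0 : comulTensorAlgebra k F (1 : TensorAlgebra k F) =
          (1 : TensorAlgebra k F) ⊗ₜ[k] (1 : TensorAlgebra k F) := by
        rw [map_one, Algebra.TensorProduct.one_def]
      simp only [Algebra.algebraMap_eq_smul_one, LinearMap.map_smul, hX1, map_smul, h0,
        LinearMap.rTensor_tmul, TensorProduct.smul_tmul']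
  | ι f =>
      intro l
      rw [hX2, comul_ta_ι, comul_ta_ι]
      have hxf : Coalgebra.comul (R := k) (x l f) =
          TensorProduct.map (x l) LinearMap.id (Coalgebra.comul f) :=
        LinearMap.congr_fun (hx l) f
      have e1 : TensorProduct.map (TensorAlgebra.ι k) (TensorAlgebra.ι k)
          (TensorProduct.map (x l) LinearMap.id (Coalgebra.comul f)) =
          TensorProduct.map ((TensorAlgebra.ι k : F →ₗ[k] TensorAlgebra k F) ∘ₗ x l)
            (TensorAlgebra.ι k) (Coalgebra.comul f) := by
        rw [← LinearMap.comp_apply, ← TensorProduct.map_comp, LinearMap.comp_id]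
      have e2 : LinearMap.rTensor (TensorAlgebra k F) (X l)
          (TensorProduct.map (TensorAlgebra.ι k) (TensorAlgebra.ι k) (Coalgebra.comul f)) =
          TensorProduct.map ((X l : TensorAlgebra k F →ₗ[k] TensorAlgebra k F) ∘ₗ
            TensorAlgebra.ι k) (TensorAlgebra.ι k) (Coalgebra.comul f) := by
        rw [show LinearMap.rTensor (TensorAlgebra k F) (X l) =
          TensorProduct.map (X l : TensorAlgebra k F →ₗ[k] TensorAlgebra k F) LinearMap.id
          from rfl]
        rw [← LinearMap.comp_apply, ← TensorProduct.map_comp, LinearMap.id_comp]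
      have e3 : (X l : TensorAlgebra k F →ₗ[k] TensorAlgebra k F) ∘ₗ TensorAlgebra.ι k =
          (TensorAlgebra.ι k : F →ₗ[k] TensorAlgebra k F) ∘ₗ x l := by
        ext f'; simp [hX2]
      rw [hxf, e1, e2, e3]
  | mul w₁ w₂ ih₁ ih₂ =>
      intro l
      rw [map_mul (comulTensorAlgebra k F) w₁ w₂, hX3, rTensor_X_mul X hX3 l]
      generalize Coalgebra.comul (R := k) l = t
      induction t using TensorProduct.induction_on with
      | zero => simp only [LinearMap.map_zero, map_zero]
      | tmul l₁ l₂ =>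
          simp only [TensorProduct.map_tmul, LinearMap.mul'_apply, LinearMap.comp_apply,
            LinearMap.applyₗ_apply_apply, LinearMap.coe_rTensorHom]
          rw [map_mul, ih₁ l₁, ih₂ l₂]
      | add t t' iht iht' =>
          simp only [map_add, LinearMap.add_apply, iht, iht']
  | add w₁ w₂ ih₁ ih₂ =>
      intro l
      simp only [map_add, LinearMap.map_add, ih₁ l, ih₂ l]

lemma pix_rightInv
    (hx : ∀ l : L, Coalgebra.comul ∘ₗ (x l : F →ₗ[k] F) =
      TensorProduct.map (x l) LinearMap.id ∘ₗ Coalgebra.comul)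
    (hX1 : ∀ l : L, X l 1 = Coalgebra.counit (R := k) l • (1 : TensorAlgebra k F))
    (hX2 : ∀ (l : L) (f : F), X l (TensorAlgebra.ι k f) = TensorAlgebra.ι k (x l f))
    (hX3 : ∀ (l : L) (w₁ w₂ : TensorAlgebra k F), X l (w₁ * w₂) =
      LinearMap.mul' k (TensorAlgebra k F)
        (TensorProduct.map (LinearMap.applyₗ w₁ ∘ₗ X) (LinearMap.applyₗ w₂ ∘ₗ X)
          (Coalgebra.comul (R := k) l)))
    (hπx : ∀ l : L, πx (TensorAlgebra.ι k l) = X l)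
    (r : TensorAlgebra k L) :
    ∀ w : TensorAlgebra k F, comulTensorAlgebra k F (πx r w) =
      LinearMap.rTensor (TensorAlgebra k F) (πx r) (comulTensorAlgebra k F w) := by
  induction r using TensorAlgebra.induction with
  | algebraMap a =>
      intro w
      rw [AlgHom.commutes]
      have h1 : (algebraMap k (Module.End k (TensorAlgebra k F)) a) w = a • w := by
        simp [Module.algebraMap_end_apply]
      have h2 : LinearMap.rTensor (TensorAlgebra k F)
          (algebraMap k (Module.End k (TensorAlgebra k F)) a) =
          a • LinearMap.rTensor (TensorAlgebra k F)
            (LinearMap.id : TensorAlgebra k F →ₗ[k] TensorAlgebra k F) := by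
        have h3 : (algebraMap k (Module.End k (TensorAlgebra k F)) a) =
            a • (LinearMap.id : TensorAlgebra k F →ₗ[k] TensorAlgebra k F) := by
          ext w'; simp [Module.algebraMap_end_apply]
        rw [h3]
        exact (LinearMap.rTensorHom (TensorAlgebra k F)).map_smul a _
      rw [h1, map_smul, h2, LinearMap.smul_apply, LinearMap.rTensor_id, LinearMap.id_apply]
  | ι l => intro w; rw [hπx]; exact X_rightInv x X hx hX1 hX2 hX3 w l
  | mul r s ihr ihs =>
      intro w
      rw [map_mul, Module.End.mul_apply, ihr (πx s w), ihs w, ← LinearMap.comp_apply,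
        ← LinearMap.rTensor_comp, ← Module.End.mul_eq_comp]
  | add r s ihr ihs =>
      intro w
      rw [map_add, LinearMap.add_apply, map_add, ihr w, ihs w, LinearMap.rTensor_add,
        LinearMap.add_apply]

lemma counit_law_B :
    ∀ w : TensorAlgebra k F,
      (TensorProduct.lid k (TensorAlgebra k F))
        (LinearMap.rTensor (TensorAlgebra k F) (counitTensorAlgebra k F).toLinearMap
          (comulTensorAlgebra k F w)) = w := by
  have mulcase : ∀ u v : TensorAlgebra k F ⊗[k] TensorAlgebra k F,
      (TensorProduct.lid k (TensorAlgebra k F))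
        (LinearMap.rTensor (TensorAlgebra k F) (counitTensorAlgebra k F).toLinearMap (u * v)) =
      (TensorProduct.lid k (TensorAlgebra k F))
        (LinearMap.rTensor (TensorAlgebra k F) (counitTensorAlgebra k F).toLinearMap u) *
      (TensorProduct.lid k (TensorAlgebra k F))
        (LinearMap.rTensor (TensorAlgebra k F) (counitTensorAlgebra k F).toLinearMap v) := by
    intro u v
    induction u using TensorProduct.induction_on with
    | zero => simp
    | tmul a b =>
        induction v using TensorProduct.induction_on with
        | zero => simp
        | tmul c d =>
            rw [Algebra.TensorProduct.tmul_mul_tmul]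
            simp only [LinearMap.rTensor_tmul, TensorProduct.lid_tmul, AlgHom.toLinearMap_apply,
              map_mul]
            rw [smul_mul_smul_comm]
        | add v v' ihv ihv' =>
            rw [mul_add, map_add, map_add, ihv, ihv', map_add, map_add, mul_add]
    | add u u' ihu ihu' =>
        rw [add_mul, map_add, map_add, ihu, ihu', map_add, map_add, add_mul]
  intro w
  induction w using TensorAlgebra.induction with
  | algebraMap a =>
      rw [AlgHom.commutes, Algebra.TensorProduct.algebraMap_apply, LinearMap.rTensor_tmul,
        TensorProduct.lid_tmul, AlgHom.toLinearMap_apply, AlgHom.commutes]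
      simp [Algebra.algebraMap_eq_smul_one]
  | ι f =>
      rw [comul_ta_ι]
      have h1 : LinearMap.rTensor (TensorAlgebra k F) (counitTensorAlgebra k F).toLinearMap
          (TensorProduct.map (TensorAlgebra.ι k) (TensorAlgebra.ι k) (Coalgebra.comul f)) =
          TensorProduct.map (Coalgebra.counit : F →ₗ[k] k)
            (TensorAlgebra.ι k : F →ₗ[k] TensorAlgebra k F) (Coalgebra.comul f) := by
        rw [show LinearMap.rTensor (TensorAlgebra k F)
            (counitTensorAlgebra k F).toLinearMap =
          TensorProduct.map (counitTensorAlgebra k F).toLinearMap LinearMap.id from rfl]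
        rw [← LinearMap.comp_apply, ← TensorProduct.map_comp, LinearMap.id_comp]
        congr 2
        ext f'
        simp [counit_ta_ι]
      have h2 : TensorProduct.map (Coalgebra.counit : F →ₗ[k] k)
          (TensorAlgebra.ι k : F →ₗ[k] TensorAlgebra k F) (Coalgebra.comul f) =
          (1 : k) ⊗ₜ[k] (TensorAlgebra.ι k f) := by
        rw [← LinearMap.lTensor_comp_rTensor, LinearMap.comp_apply,
          Coalgebra.rTensor_counit_comul, LinearMap.lTensor_tmul]
      rw [h1, h2, TensorProduct.lid_tmul, one_smul]
  | mul w₁ w₂ ih₁ ih₂ => rw [map_mul, mulcase, ih₁, ih₂]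
  | add w₁ w₂ ih₁ ih₂ => rw [map_add, map_add, map_add, ih₁, ih₂]

lemma pix_eq_zero_of_counit
    (hx : ∀ l : L, Coalgebra.comul ∘ₗ (x l : F →ₗ[k] F) =
      TensorProduct.map (x l) LinearMap.id ∘ₗ Coalgebra.comul)
    (hX1 : ∀ l : L, X l 1 = Coalgebra.counit (R := k) l • (1 : TensorAlgebra k F))
    (hX2 : ∀ (l : L) (f : F), X l (TensorAlgebra.ι k f) = TensorAlgebra.ι k (x l f))
    (hX3 : ∀ (l : L) (w₁ w₂ : TensorAlgebra k F), X l (w₁ * w₂) =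
      LinearMap.mul' k (TensorAlgebra k F)
        (TensorProduct.map (LinearMap.applyₗ w₁ ∘ₗ X) (LinearMap.applyₗ w₂ ∘ₗ X)
          (Coalgebra.comul (R := k) l)))
    (hπx : ∀ l : L, πx (TensorAlgebra.ι k l) = X l)
    (r : TensorAlgebra k L)
    (h : (counitTensorAlgebra k F).toLinearMap ∘ₗ (πx r : _ →ₗ[k] _) = 0) :
    πx r = 0 := by
  ext w
  have h1 := counit_law_B (k := k) (F := F) (πx r w)
  rw [pix_rightInv x X πx hx hX1 hX2 hX3 hπx r w, ← LinearMap.comp_apply,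
    ← LinearMap.rTensor_comp, h, LinearMap.rTensor_zero, LinearMap.zero_apply,
    LinearEquiv.map_zero] at h1
  rw [LinearMap.zero_apply]
  exact h1.symm

end Core


-- general decomposition lemma for the forward direction
lemma conv_decomp {k : Type*} [Field k] {V : Type*} [AddCommGroup V] [Module k V]
    [FiniteDimensional k V] {B : Type*} [Ring B] [Algebra k B]
    (S : Submodule k (V →ₗ[k] k)) (Δ : V →ₗ[k] V ⊗[k] V)
    (g₁ g₂ : V →ₗ[k] B) (θ : B →ₗ[k] k)
    (h₁ : ∀ θ' : B →ₗ[k] k, θ' ∘ₗ g₁ ∈ S)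
    (h₂ : ∀ θ' : B →ₗ[k] k, θ' ∘ₗ g₂ ∈ S)
    (hconv : ∀ φ ψ : V →ₗ[k] k, φ ∈ S → ψ ∈ S →
      (LinearMap.mul' k k ∘ₗ TensorProduct.map φ ψ ∘ₗ Δ) ∈ S) :
    (θ ∘ₗ LinearMap.mul' k B ∘ₗ TensorProduct.map g₁ g₂ ∘ₗ Δ) ∈ S := by
  have hg₁ : (LinearMap.range g₁).subtype ∘ₗ g₁.rangeRestrict = g₁ := by ext v; rfl
  have hg₂ : (LinearMap.range g₂).subtype ∘ₗ g₂.rangeRestrict = g₂ := by ext v; rfl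
  obtain ⟨t, ht⟩ : ∃ t, TensorProduct.dualDistrib k ↥(LinearMap.range g₁)
      ↥(LinearMap.range g₂) t = θ ∘ₗ LinearMap.mul' k B ∘ₗ
        TensorProduct.map (LinearMap.range g₁).subtype (LinearMap.range g₂).subtype := by
    obtain ⟨t, ht⟩ := (TensorProduct.dualDistribEquiv k ↥(LinearMap.range g₁)
      ↥(LinearMap.range g₂)).surjective (θ ∘ₗ LinearMap.mul' k B ∘ₗ
        TensorProduct.map (LinearMap.range g₁).subtype (LinearMap.range g₂).subtype)
    exact ⟨t, by rw [← ht]; rfl⟩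
  have key : ∀ t : Module.Dual k ↥(LinearMap.range g₁) ⊗[k] Module.Dual k ↥(LinearMap.range g₂),
      ((TensorProduct.dualDistrib k ↥(LinearMap.range g₁) ↥(LinearMap.range g₂) t) ∘ₗ
        TensorProduct.map g₁.rangeRestrict g₂.rangeRestrict ∘ₗ Δ) ∈ S := by
    intro t
    induction t using TensorProduct.induction_on with
    | zero =>
        rw [map_zero, LinearMap.zero_comp]
        exact S.zero_mem
    | tmul ξ η =>
        obtain ⟨θ₁, hθ₁⟩ := LinearMap.exists_extend ξ
        obtain ⟨θ₂, hθ₂⟩ := LinearMap.exists_extend η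
        have m1 : ξ ∘ₗ g₁.rangeRestrict = θ₁ ∘ₗ g₁ := by
          rw [← hθ₁, LinearMap.comp_assoc, hg₁]
        have m2 : η ∘ₗ g₂.rangeRestrict = θ₂ ∘ₗ g₂ := by
          rw [← hθ₂, LinearMap.comp_assoc, hg₂]
        have hmem : (LinearMap.mul' k k ∘ₗ TensorProduct.map (ξ ∘ₗ g₁.rangeRestrict)
            (η ∘ₗ g₂.rangeRestrict) ∘ₗ Δ) ∈ S := by
          rw [m1, m2]; exact hconv _ _ (h₁ θ₁) (h₂ θ₂)
        have he : (TensorProduct.dualDistrib k ↥(LinearMap.range g₁) ↥(LinearMap.range g₂)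
            (ξ ⊗ₜ[k] η)) ∘ₗ TensorProduct.map g₁.rangeRestrict g₂.rangeRestrict ∘ₗ Δ =
            LinearMap.mul' k k ∘ₗ TensorProduct.map (ξ ∘ₗ g₁.rangeRestrict)
              (η ∘ₗ g₂.rangeRestrict) ∘ₗ Δ := by
          ext v
          simp only [LinearMap.comp_apply]
          generalize Δ v = u
          induction u using TensorProduct.induction_on with
          | zero => simp only [LinearMap.map_zero]
          | tmul a b =>
              simp only [TensorProduct.map_tmul, TensorProduct.dualDistrib_apply,
                LinearMap.mul'_apply, LinearMap.comp_apply]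
          | add u u' ih ih' => simp only [LinearMap.map_add, ih, ih']
        rw [he]; exact hmem
    | add t t' iht iht' =>
        have : (TensorProduct.dualDistrib k ↥(LinearMap.range g₁) ↥(LinearMap.range g₂)
            (t + t')) ∘ₗ TensorProduct.map g₁.rangeRestrict g₂.rangeRestrict ∘ₗ Δ =
            (TensorProduct.dualDistrib k ↥(LinearMap.range g₁) ↥(LinearMap.range g₂) t) ∘ₗ
              TensorProduct.map g₁.rangeRestrict g₂.rangeRestrict ∘ₗ Δ +
            (TensorProduct.dualDistrib k ↥(LinearMap.range g₁) ↥(LinearMap.range g₂) t') ∘ₗ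
              TensorProduct.map g₁.rangeRestrict g₂.rangeRestrict ∘ₗ Δ := by
          rw [map_add, LinearMap.add_comp]
        rw [this]
        exact S.add_mem iht iht'
  have hu : ∀ u : V ⊗[k] V,
      TensorProduct.map (LinearMap.range g₁).subtype (LinearMap.range g₂).subtype
        (TensorProduct.map g₁.rangeRestrict g₂.rangeRestrict u) =
      TensorProduct.map g₁ g₂ u := fun u => by
    rw [← LinearMap.comp_apply, ← TensorProduct.map_comp, hg₁, hg₂]
  have pre : θ ∘ₗ LinearMap.mul' k B ∘ₗ TensorProduct.map g₁ g₂ ∘ₗ Δ =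
      (TensorProduct.dualDistrib k ↥(LinearMap.range g₁) ↥(LinearMap.range g₂) t) ∘ₗ
        TensorProduct.map g₁.rangeRestrict g₂.rangeRestrict ∘ₗ Δ := by
    ext v
    simp only [LinearMap.comp_apply]
    rw [ht]
    simp only [LinearMap.comp_apply]
    rw [hu]
  rw [pre]
  exact key t


section Main
variable {k L F : Type*} [Field k]
  [AddCommGroup L] [Module k L] [Coalgebra k L]
  [AddCommGroup F] [Module k F] [Coalgebra k F]
  (x : L →ₗ[k] Module.End k F)
  (X : L →ₗ[k] Module.End k (TensorAlgebra k F))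
  (πx : TensorAlgebra k L →ₐ[k] Module.End k (TensorAlgebra k F))
  (πx1 : TensorAlgebra k L →ₐ[k] Module.End k F)

/-- `π_x` applied to an element of `T_m(L)` on a product, expressed through `Δm`. -/
lemma pix_mul_via_Dm
    (hX3 : ∀ (l : L) (w₁ w₂ : TensorAlgebra k F), X l (w₁ * w₂) =
      LinearMap.mul' k (TensorAlgebra k F)
        (TensorProduct.map (LinearMap.applyₗ w₁ ∘ₗ X) (LinearMap.applyₗ w₂ ∘ₗ X)
          (Coalgebra.comul (R := k) l)))
    (hπx : ∀ l : L, πx (TensorAlgebra.ι k l) = X l)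
    (m : ℕ)
    (Δm : ↥(Tm k L m) →ₗ[k] ↥(Tm k L m) ⊗[k] ↥(Tm k L m))
    (hΔm : TensorProduct.map (Tm k L m).subtype (Tm k L m).subtype ∘ₗ Δm =
      (comulTensorAlgebra k L).toLinearMap ∘ₗ (Tm k L m).subtype)
    (r : ↥(Tm k L m)) (w₁ w₂ : TensorAlgebra k F) :
    πx (r : TensorAlgebra k L) (w₁ * w₂) =
      LinearMap.mul' k (TensorAlgebra k F) (TensorProduct.map
        (LinearMap.applyₗ w₁ ∘ₗ πx.toLinearMap ∘ₗ (Tm k L m).subtype)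
        (LinearMap.applyₗ w₂ ∘ₗ πx.toLinearMap ∘ₗ (Tm k L m).subtype) (Δm r)) := by
  have hΔ : TensorProduct.map (Tm k L m).subtype (Tm k L m).subtype (Δm r) =
      comulTensorAlgebra k L (r : TensorAlgebra k L) := LinearMap.congr_fun hΔm r
  have hmaps : TensorProduct.map (LinearMap.applyₗ w₁ ∘ₗ πx.toLinearMap)
      (LinearMap.applyₗ w₂ ∘ₗ πx.toLinearMap)
      (TensorProduct.map (Tm k L m).subtype (Tm k L m).subtype (Δm r)) =
      TensorProduct.map (LinearMap.applyₗ w₁ ∘ₗ πx.toLinearMap ∘ₗ (Tm k L m).subtype)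
        (LinearMap.applyₗ w₂ ∘ₗ πx.toLinearMap ∘ₗ (Tm k L m).subtype) (Δm r) := by
    rw [← LinearMap.comp_apply, ← TensorProduct.map_comp, LinearMap.comp_assoc,
      LinearMap.comp_assoc]
  rw [pix_mul_expand X πx hX3 hπx (r : TensorAlgebra k L) w₁ w₂, ← hΔ, hmaps]

end Main



/-- first construction of the space of relations of order `m`:
an element `c ∈ T_m(L)` is orthogonal to the smallest unital subalgebra `B(W_m)` of the
convolution algebra `T_m(L)*` containing `W_m` (the annihilator of `R¹_m = T_m(L) ∩ ker π_x¹`)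
if and only if `c` is a relation of order `m`, i.e. `π_x(c) = 0`.
Here `Δm` is the comultiplication of the subcoalgebra `T_m(L)` (the restriction of
`Δ_{T(L)}`), the convolution of `φ, ψ ∈ T_m(L)*` is `(φ ⊗ ψ) ∘ Δm`, and the unit is the
restriction of `ε_{T(L)}`.  Orthogonality to the smallest unital convolution-closed
submodule containing `W_m` is expressed by the existence of a unital convolution-closed
submodule `S ⊇ W_m` annihilating `c`. -/
theorem relations_order_m_first_construction
    (k L F : Type*) [Field k]
    [AddCommGroup L] [Module k L] [Coalgebra k L] [FiniteDimensional k L]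
    [AddCommGroup F] [Module k F] [Coalgebra k F] [FiniteDimensional k F]
    (x : L →ₗ[k] Module.End k F)
    (hx : ∀ l : L, Coalgebra.comul ∘ₗ (x l : F →ₗ[k] F) =
      TensorProduct.map (x l) LinearMap.id ∘ₗ Coalgebra.comul)
    (X : L →ₗ[k] Module.End k (TensorAlgebra k F))
    (hX1 : ∀ l : L, X l 1 = Coalgebra.counit (R := k) l • (1 : TensorAlgebra k F))
    (hX2 : ∀ (l : L) (f : F), X l (TensorAlgebra.ι k f) = TensorAlgebra.ι k (x l f))
    (hX3 : ∀ (l : L) (w₁ w₂ : TensorAlgebra k F), X l (w₁ * w₂) =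
      LinearMap.mul' k (TensorAlgebra k F)
        (TensorProduct.map (LinearMap.applyₗ w₁ ∘ₗ X) (LinearMap.applyₗ w₂ ∘ₗ X)
          (Coalgebra.comul (R := k) l)))
    (πx : TensorAlgebra k L →ₐ[k] Module.End k (TensorAlgebra k F))
    (hπx : ∀ l : L, πx (TensorAlgebra.ι k l) = X l)
    (πx1 : TensorAlgebra k L →ₐ[k] Module.End k F)
    (hπx1 : ∀ l : L, πx1 (TensorAlgebra.ι k l) = x l)
    (m : ℕ)
    (Δm : ↥(Tm k L m) →ₗ[k] ↥(Tm k L m) ⊗[k] ↥(Tm k L m))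
    (hΔm : TensorProduct.map (Tm k L m).subtype (Tm k L m).subtype ∘ₗ Δm =
      (comulTensorAlgebra k L).toLinearMap ∘ₗ (Tm k L m).subtype) :
    ∀ c : ↥(Tm k L m),
      (∃ S : Submodule k (↥(Tm k L m) →ₗ[k] k),
        ((counitTensorAlgebra k L).toLinearMap ∘ₗ (Tm k L m).subtype) ∈ S ∧
        (∀ φ : ↥(Tm k L m) →ₗ[k] k,
          (∀ r : ↥(Tm k L m), πx1 (r : TensorAlgebra k L) = 0 → φ r = 0) → φ ∈ S) ∧
        (∀ φ ψ : ↥(Tm k L m) →ₗ[k] k, φ ∈ S → ψ ∈ S →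
          (LinearMap.mul' k k ∘ₗ TensorProduct.map φ ψ ∘ₗ Δm) ∈ S) ∧
        (∀ φ ∈ S, φ c = 0)) ↔
      πx (c : TensorAlgebra k L) = 0 := by
  intro c
  constructor
  · -- forward direction
    rintro ⟨S, hS1, hS2, hS3, hS4⟩
    have CL : ∀ (w : TensorAlgebra k F) (θ : Module.Dual k (TensorAlgebra k F)),
        (θ ∘ₗ LinearMap.applyₗ w ∘ₗ πx.toLinearMap ∘ₗ (Tm k L m).subtype) ∈ S := by
      intro w
      induction w using TensorAlgebra.induction with
      | algebraMap a =>
          intro θ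
          have he : θ ∘ₗ LinearMap.applyₗ (algebraMap k (TensorAlgebra k F) a) ∘ₗ
              πx.toLinearMap ∘ₗ (Tm k L m).subtype =
              (a * θ 1) • ((counitTensorAlgebra k L).toLinearMap ∘ₗ (Tm k L m).subtype) := by
            ext r
            simp only [LinearMap.comp_apply, LinearMap.applyₗ_apply_apply,
              AlgHom.toLinearMap_apply, LinearMap.smul_apply, smul_eq_mul,
              Submodule.subtype_apply]
            rw [Algebra.algebraMap_eq_smul_one, LinearMap.map_smul,
              pix_one_s17 X πx hX1 hπx (r : TensorAlgebra k L)]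
            simp only [map_smul, smul_eq_mul]
            ring
          rw [he]
          exact S.smul_mem _ hS1
      | ι f =>
          intro θ
          apply hS2
          intro r hr
          simp only [LinearMap.comp_apply, LinearMap.applyₗ_apply_apply,
            AlgHom.toLinearMap_apply, Submodule.subtype_apply]
          rw [pix_iota x X πx πx1 hX2 hπx hπx1 (r : TensorAlgebra k L) f, hr]
          simp
      | add w₁ w₂ ih₁ ih₂ =>
          intro θ
          have he : θ ∘ₗ LinearMap.applyₗ (w₁ + w₂) ∘ₗ πx.toLinearMap ∘ₗ
              (Tm k L m).subtype =
              (θ ∘ₗ LinearMap.applyₗ w₁ ∘ₗ πx.toLinearMap ∘ₗ (Tm k L m).subtype) +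
              (θ ∘ₗ LinearMap.applyₗ w₂ ∘ₗ πx.toLinearMap ∘ₗ (Tm k L m).subtype) := by
            ext r
            simp [LinearMap.applyₗ]
          rw [he]
          exact S.add_mem (ih₁ θ) (ih₂ θ)
      | mul w₁ w₂ ih₁ ih₂ =>
          intro θ
          have he : θ ∘ₗ LinearMap.applyₗ (w₁ * w₂) ∘ₗ πx.toLinearMap ∘ₗ
              (Tm k L m).subtype =
              θ ∘ₗ LinearMap.mul' k (TensorAlgebra k F) ∘ₗ TensorProduct.map
                (LinearMap.applyₗ w₁ ∘ₗ πx.toLinearMap ∘ₗ (Tm k L m).subtype)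
                (LinearMap.applyₗ w₂ ∘ₗ πx.toLinearMap ∘ₗ (Tm k L m).subtype) ∘ₗ Δm := by
            ext r
            simp only [LinearMap.comp_apply, LinearMap.applyₗ_apply_apply,
              AlgHom.toLinearMap_apply, Submodule.subtype_apply]
            rw [pix_mul_via_Dm X πx hX3 hπx m Δm hΔm r w₁ w₂]
          rw [he]
          exact conv_decomp S Δm
            (LinearMap.applyₗ w₁ ∘ₗ πx.toLinearMap ∘ₗ (Tm k L m).subtype)
            (LinearMap.applyₗ w₂ ∘ₗ πx.toLinearMap ∘ₗ (Tm k L m).subtype) θ ih₁ ih₂ hS3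
    ext w
    rw [LinearMap.zero_apply]
    exact (Module.forall_dual_apply_eq_zero_iff k _).mp fun θ => hS4 _ (CL w θ)
  · -- backward direction
    intro hc
    set S : Submodule k (↥(Tm k L m) →ₗ[k] k) :=
      ⨅ r : {r : ↥(Tm k L m) // πx (r : TensorAlgebra k L) = 0},
        LinearMap.ker (LinearMap.applyₗ (r.1 : ↥(Tm k L m))) with hSdef
    have hmemS : ∀ χ : ↥(Tm k L m) →ₗ[k] k,
        χ ∈ S ↔ ∀ r : ↥(Tm k L m), πx (r : TensorAlgebra k L) = 0 → χ r = 0 := by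
      intro χ
      rw [hSdef, Submodule.mem_iInf]
      constructor
      · intro h r hr
        exact LinearMap.mem_ker.mp (h ⟨r, hr⟩)
      · intro h z
        exact LinearMap.mem_ker.mpr (h z.1 z.2)
    refine ⟨S, ?_, ?_, ?_, ?_⟩
    · -- counit belongs to S
      refine (hmemS _).mpr ?_
      intro r hr
      simp only [LinearMap.comp_apply, AlgHom.toLinearMap_apply, Submodule.subtype_apply]
      have h1 := pix_one_s17 X πx hX1 hπx (r : TensorAlgebra k L)
      rw [hr, LinearMap.zero_apply] at h1
      rcases smul_eq_zero.mp h1.symm with h | h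
      · exact h
      · exact absurd h one_ne_zero
    · -- W_m ⊆ S
      intro φ hφ
      refine (hmemS _).mpr ?_
      intro r hr
      apply hφ r
      ext f
      rw [LinearMap.zero_apply]
      have h2 := pix_iota x X πx πx1 hX2 hπx hπx1 (r : TensorAlgebra k L) f
      rw [hr, LinearMap.zero_apply] at h2
      exact (TensorAlgebra.ι_eq_zero_iff k (πx1 (r : TensorAlgebra k L) f)).mp h2.symm
    · -- convolution closure
      intro φ ψ hφ hψ
      have hφ' := (hmemS φ).mp hφ
      have hψ' := (hmemS ψ).mp hψ
      refine (hmemS _).mpr ?_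
      intro r hr
      set βm : ↥(Tm k L m) →ₗ[k] (TensorAlgebra k F →ₗ[k] k) :=
        (LinearMap.llcomp k (TensorAlgebra k F) (TensorAlgebra k F) k
          (counitTensorAlgebra k F).toLinearMap) ∘ₗ
          (πx.toLinearMap ∘ₗ (Tm k L m).subtype) with hβdef
      have hβ : ∀ s : ↥(Tm k L m), βm s = (counitTensorAlgebra k F).toLinearMap ∘ₗ
          (πx (s : TensorAlgebra k L) :
            TensorAlgebra k F →ₗ[k] TensorAlgebra k F) := fun s => rfl
      have hker : ∀ s : ↥(Tm k L m), βm s = 0 → πx (s : TensorAlgebra k L) = 0 := by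
        intro s hs
        exact pix_eq_zero_of_counit x X πx hx hX1 hX2 hX3 hπx _ ((hβ s) ▸ hs)
      have hc1 : (counitTensorAlgebra k F).toLinearMap ∘ₗ
          LinearMap.mul' k (TensorAlgebra k F) =
          LinearMap.mul' k k ∘ₗ TensorProduct.map (counitTensorAlgebra k F).toLinearMap
            (counitTensorAlgebra k F).toLinearMap := by
        apply TensorProduct.ext'
        intro a b
        simp [LinearMap.mul'_apply, map_mul]
      have hEval : ∀ w₁ w₂ : TensorAlgebra k F,
          LinearMap.mul' k k (TensorProduct.map (LinearMap.applyₗ w₁ ∘ₗ βm)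
            (LinearMap.applyₗ w₂ ∘ₗ βm) (Δm r)) = 0 := by
        intro w₁ w₂
        have e1 : (counitTensorAlgebra k F).toLinearMap ∘ₗ
            (LinearMap.applyₗ w₁ ∘ₗ πx.toLinearMap ∘ₗ (Tm k L m).subtype) =
            LinearMap.applyₗ w₁ ∘ₗ βm := by ext s; rfl
        have e2 : (counitTensorAlgebra k F).toLinearMap ∘ₗ
            (LinearMap.applyₗ w₂ ∘ₗ πx.toLinearMap ∘ₗ (Tm k L m).subtype) =
            LinearMap.applyₗ w₂ ∘ₗ βm := by ext s; rfl
        have step : (counitTensorAlgebra k F) (πx (r : TensorAlgebra k L) (w₁ * w₂)) =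
            LinearMap.mul' k k (TensorProduct.map (LinearMap.applyₗ w₁ ∘ₗ βm)
              (LinearMap.applyₗ w₂ ∘ₗ βm) (Δm r)) := by
          rw [pix_mul_via_Dm X πx hX3 hπx m Δm hΔm r w₁ w₂, ← AlgHom.toLinearMap_apply,
            ← LinearMap.comp_apply, hc1, LinearMap.comp_apply,
            ← LinearMap.comp_apply (TensorProduct.map _ _), ← TensorProduct.map_comp,
            e1, e2]
        rw [← step, hr]
        simp
      have hsub : (LinearMap.range βm).subtype ∘ₗ βm.rangeRestrict = βm := by ext s; rfl
      have hu₀ : TensorProduct.map βm.rangeRestrict βm.rangeRestrict (Δm r) = 0 := by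
        refine aux_tensor_eq_zero_of_separating (V := ↥(LinearMap.range βm)) (W := ↥(LinearMap.range βm)) _
          (Set.range fun w : TensorAlgebra k F =>
            LinearMap.applyₗ w ∘ₗ (LinearMap.range βm).subtype)
          (Set.range fun w : TensorAlgebra k F =>
            LinearMap.applyₗ w ∘ₗ (LinearMap.range βm).subtype) ?_ ?_ ?_
        · intro v hv
          have hv' : ∀ w, (v : TensorAlgebra k F →ₗ[k] k) w = 0 := fun w => hv _ ⟨w, rfl⟩
          exact Subtype.ext (LinearMap.ext hv')
        · intro v hv
          have hv' : ∀ w, (v : TensorAlgebra k F →ₗ[k] k) w = 0 := fun w => hv _ ⟨w, rfl⟩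
          exact Subtype.ext (LinearMap.ext hv')
        · rintro f ⟨w₁, rfl⟩ g ⟨w₂, rfl⟩
          have e3 : TensorProduct.map
              (LinearMap.applyₗ w₁ ∘ₗ (LinearMap.range βm).subtype)
              (LinearMap.applyₗ w₂ ∘ₗ (LinearMap.range βm).subtype)
              (TensorProduct.map βm.rangeRestrict βm.rangeRestrict (Δm r)) =
              TensorProduct.map (LinearMap.applyₗ w₁ ∘ₗ βm)
                (LinearMap.applyₗ w₂ ∘ₗ βm) (Δm r) := by
            rw [← LinearMap.comp_apply, ← TensorProduct.map_comp, LinearMap.comp_assoc,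
              LinearMap.comp_assoc, hsub]
          rw [e3]
          exact hEval w₁ w₂
      haveI : Module.Projective k ↥(LinearMap.range βm) :=
        Module.Projective.of_basis (Module.Basis.ofVectorSpace k ↥(LinearMap.range βm))
      obtain ⟨σ, hσ⟩ := βm.rangeRestrict.exists_rightInverse_of_surjective
        (LinearMap.range_rangeRestrict βm)
      have hfact : ∀ χ : ↥(Tm k L m) →ₗ[k] k,
          (∀ s : ↥(Tm k L m), πx (s : TensorAlgebra k L) = 0 → χ s = 0) →
          (χ ∘ₗ σ) ∘ₗ βm.rangeRestrict = χ := by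
        intro χ hχ
        ext s
        have h1 : βm.rangeRestrict ((σ (βm.rangeRestrict s)) - s) = 0 := by
          rw [map_sub, ← LinearMap.comp_apply, hσ, LinearMap.id_apply, sub_self]
        have h2 : βm ((σ (βm.rangeRestrict s)) - s) = 0 := congrArg Subtype.val h1
        have h3 := hχ _ (hker _ h2)
        rw [map_sub] at h3
        simp only [LinearMap.comp_apply]
        exact sub_eq_zero.mp h3
      have hfφ := hfact φ hφ'
      have hfψ := hfact ψ hψ'
      have e4 : TensorProduct.map φ ψ (Δm r) =
          TensorProduct.map (φ ∘ₗ σ) (ψ ∘ₗ σ)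
            (TensorProduct.map βm.rangeRestrict βm.rangeRestrict (Δm r)) := by
        conv_rhs => rw [← LinearMap.comp_apply, ← TensorProduct.map_comp, hfφ, hfψ]
      simp only [LinearMap.comp_apply]
      rw [e4, hu₀, LinearMap.map_zero, LinearMap.map_zero]
    · -- S annihilates c
      intro φ hφ
      exact ((hmemS φ).mp hφ) c hc
end
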